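/- arXiv:1901.08359 — 8 statements merged into one kernel-verified Lean document; each statement's English description precedes it below -/
import Mathlib

section
/- Let A ∈ ℝ^{m×n}, b ∈ ℝ^m, let ℝ^m carry the Euclidean norm and ℝ^n an arbitrary norm ‖·‖, let X ⊆ ℝ^n be a convex set containing more than one point, let D(y,x) := (1/2)‖y − x‖², and let f(x) := (1/2)‖Ax − b‖₂². Then inf{L > 0 : D_f(y,x) ≤ L·D(y,x) for all x,y ∈ X} = ‖A|span(X−X)‖², where span(X−X) is the linear span of {x − y : x,y ∈ X}. -/
/-! The Bregman distance of `f = ½‖A · - b‖²` is exactly `½‖A (y - x)‖²`, so `L > 0` is admissible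
iff `‖A d‖ ≤ √L · ‖d‖` for every `d ∈ X - X`. Since `X` is convex, every vector of
`span (X - X)` is a nonnegative multiple of such a `d`, and both sides are positively homogeneous,
so this holds iff `‖A s‖ ≤ √L · ‖s‖` on the whole span, i.e. iff `‖A|span (X - X)‖ ≤ √L`.
The admissible constants are thus `{L > 0 | ‖A|span (X - X)‖² ≤ L}`. -/

open scoped RealInnerProductSpace Pointwise
open Set Submodule

theorem Convex.exists_nonneg_mem_smul_of_mem_span {E : Type*} [AddCommGroup E] [Module ℝ E]
    {S : Set E} (hS : Convex ℝ S) (hne : S.Nonempty) (hneg : -S = S) {x : E}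
    (hx : x ∈ span ℝ S) : ∃ t : ℝ, 0 ≤ t ∧ x ∈ t • S := by
  induction hx using span_induction with
  | mem x hx => exact ⟨1, zero_le_one, by rwa [one_smul]⟩
  | zero => exact ⟨0, le_rfl, by rw [zero_smul_set hne]; rfl⟩
  | add x y _ _ hx hy =>
    obtain ⟨s, hs, hxs⟩ := hx
    obtain ⟨t, ht, hyt⟩ := hy
    exact ⟨s + t, add_nonneg hs ht, hS.add_smul hs ht ▸ add_mem_add hxs hyt⟩
  | smul c x _ hx =>
    obtain ⟨t, ht, hxt⟩ := hx
    rcases le_total 0 c with hc | hc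
    · exact ⟨c * t, mul_nonneg hc ht, by rw [mul_smul]; exact smul_mem_smul_set hxt⟩
    · have hnx : -x ∈ t • S := by rw [← hneg, smul_set_neg]; exact neg_mem_neg.mpr hxt
      refine ⟨-c * t, mul_nonneg (neg_nonneg.mpr hc) ht, ?_⟩
      rw [mul_smul, ← neg_smul_neg]
      exact smul_mem_smul_set hnx

theorem Convex.forall_sub_le_mul_iff_forall_mem_span {E : Type*} [AddCommGroup E] [Module ℝ E]
    {X : Set E} (hX : Convex ℝ X) (hne : X.Nonempty) {p q : Seminorm ℝ E} {c : ℝ} :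
    (∀ x ∈ X, ∀ y ∈ X, q (y - x) ≤ c * p (y - x)) ↔ ∀ s ∈ span ℝ (X - X), q s ≤ c * p s := by
  refine ⟨fun h s hs ↦ ?_, fun h x hx y hy ↦ h _ (subset_span (sub_mem_sub hy hx))⟩
  obtain ⟨t, ht, d, ⟨y, hy, x, hx, rfl⟩, rfl⟩ :=
    (hX.sub hX).exists_nonneg_mem_smul_of_mem_span (hne.sub hne) (neg_sub X X) hs
  simp only [map_smul_eq_mul, Real.norm_eq_abs, abs_of_nonneg ht]
  exact (mul_le_mul_of_nonneg_left (h x hx y hy) ht).trans_eq (mul_left_comm t c _)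

theorem LinearMap.exists_norm_apply_le_mul_seminorm {E F : Type*} [AddCommGroup E] [Module ℝ E]
    [FiniteDimensional ℝ E] [NormedAddCommGroup F] [NormedSpace ℝ F] (p : Seminorm ℝ E)
    (hp : ∀ x, p x = 0 → x = 0) (A : E →ₗ[ℝ] F) : ∃ C, ∀ x, ‖A x‖ ≤ C * p x := by
  let : NormedAddCommGroup E := AddGroupNorm.toNormedAddCommGroup
    { p.toAddGroupSeminorm with eq_zero_of_map_eq_zero' := hp }
  let : NormedSpace ℝ E := ⟨fun c x ↦ (map_smul_eq_mul p c x).le⟩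
  exact ⟨‖A.toContinuousLinearMap‖, A.toContinuousLinearMap.le_opNorm⟩

section LeastSquares

variable {E F : Type*} [NormedAddCommGroup E] [InnerProductSpace ℝ E] [CompleteSpace E]
  [NormedAddCommGroup F] [InnerProductSpace ℝ F] {A : E →L[ℝ] F} {b : F} {x g : E}

theorem HasGradientAt.inner_eq_of_half_norm_sq_sub
    (hg : HasGradientAt (fun x ↦ 1 / 2 * ‖A x - b‖ ^ 2) g x) (h : E) :
    ⟪g, h⟫ = ⟪A x - b, A h⟫ := by
  have hA : HasFDerivAt (fun x ↦ 1 / 2 * ‖A x - b‖ ^ 2)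
      ((1 / 2 : ℝ) • (2 • innerSL ℝ (A x - b) ∘L A)) x :=
    ((A.hasFDerivAt.sub_const b).norm_sq).const_mul (1 / 2)
  have := congrArg (· h) (hg.hasFDerivAt.unique hA)
  simpa [two_smul, ← two_mul, inner_sub_left] using this

theorem bregman_half_norm_sq_sub (hg : HasGradientAt (fun x ↦ 1 / 2 * ‖A x - b‖ ^ 2) g x)
    (y : E) :
    1 / 2 * ‖A y - b‖ ^ 2 - 1 / 2 * ‖A x - b‖ ^ 2 - ⟪g, y - x⟫ = 1 / 2 * ‖A (y - x)‖ ^ 2 := by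
  have hy : A y - b = (A x - b) + A (y - x) := by rw [map_sub]; abel
  rw [hg.inner_eq_of_half_norm_sq_sub, hy, norm_add_sq_real]
  ring

end LeastSquares

namespace Seminorm

variable {E : Type*} [AddCommGroup E] [Module ℝ E] {p q : Seminorm ℝ E} {V : Submodule ℝ E}
  {C : ℝ}

theorem bddAbove_of_le_mul (hC : ∀ x ∈ V, q x ≤ C * p x) :
    BddAbove {r | ∃ x ∈ (V : Set E), p x ≤ 1 ∧ r = q x} := by
  refine ⟨max C 0, ?_⟩
  rintro _ ⟨x, hx, hx1, rfl⟩
  calc q x ≤ C * p x := hC x hx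
    _ ≤ max C 0 * p x := mul_le_mul_of_nonneg_right (le_max_left C 0) (apply_nonneg p x)
    _ ≤ max C 0 := mul_le_of_le_one_right (le_max_right C 0) hx1

theorem le_sSup_mul_of_le_mul (hC : ∀ x ∈ V, q x ≤ C * p x) {x : E} (hx : x ∈ V) :
    q x ≤ sSup {r | ∃ x ∈ (V : Set E), p x ≤ 1 ∧ r = q x} * p x := by
  rcases (apply_nonneg p x).eq_or_lt with hpx | hpx
  · simpa [← hpx] using hC x hx
  have hmem : (p x)⁻¹ * q x ∈ {r | ∃ x ∈ (V : Set E), p x ≤ 1 ∧ r = q x} := by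
    refine ⟨(p x)⁻¹ • x, V.smul_mem _ hx, ?_, ?_⟩ <;>
      simp only [map_smul_eq_mul, Real.norm_eq_abs, abs_inv, abs_of_pos hpx]
    exact (inv_mul_cancel₀ hpx.ne').le
  have := le_csSup (bddAbove_of_le_mul hC) hmem
  rwa [inv_mul_le_iff₀ hpx, mul_comm] at this

theorem forall_le_mul_iff_sSup_le (hC : ∀ x ∈ V, q x ≤ C * p x) {c : ℝ} (hc : 0 ≤ c) :
    (∀ x ∈ V, q x ≤ c * p x) ↔ sSup {r | ∃ x ∈ (V : Set E), p x ≤ 1 ∧ r = q x} ≤ c := by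
  refine ⟨fun h ↦ csSup_le ⟨0, 0, V.zero_mem, by simp, by simp⟩ ?_, fun h x hx ↦ ?_⟩
  · rintro _ ⟨x, hx, hx1, rfl⟩
    exact (h x hx).trans (mul_le_of_le_one_right hc hx1)
  · exact (le_sSup_mul_of_le_mul hC hx).trans (mul_le_mul_of_nonneg_right h (apply_nonneg p x))

end Seminorm

theorem Real.half_sq_le_mul_half_sq_iff {a b L : ℝ} (ha : 0 ≤ a) (hb : 0 ≤ b) (hL : 0 ≤ L) :
    1 / 2 * a ^ 2 ≤ L * (1 / 2 * b ^ 2) ↔ a ≤ √L * b := by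
  rw [mul_left_comm, mul_le_mul_iff_right₀ one_half_pos, ← sq_le_sq₀ ha (by positivity), mul_pow,
    Real.sq_sqrt hL]

theorem Real.sInf_setOf_pos_and_le {a : ℝ} (ha : 0 ≤ a) : sInf {L : ℝ | 0 < L ∧ a ≤ L} = a := by
  rcases ha.eq_or_lt with rfl | ha
  · have : {L : ℝ | 0 < L ∧ 0 ≤ L} = Ioi 0 := ext fun L ↦ ⟨And.left, fun h ↦ ⟨h, h.le⟩⟩
    rw [this, csInf_Ioi]
  · have : {L : ℝ | 0 < L ∧ a ≤ L} = Ici a := by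
      ext L; exact ⟨And.right, fun h ↦ ⟨ha.trans_le h, h⟩⟩
    rw [this, csInf_Ici]

/-- the relative smoothness constant of f(x) = (1/2)‖Ax − b‖₂² relative to
(X, D) with D(y,x) = (1/2)‖y − x‖² equals ‖A|span(X−X)‖². -/
theorem relative_smoothness_constant_of_least_squares {m n : ℕ}
    (A : EuclideanSpace ℝ (Fin n) →ₗ[ℝ] EuclideanSpace ℝ (Fin m))
    (b : EuclideanSpace ℝ (Fin m))
    (nn : EuclideanSpace ℝ (Fin n) → ℝ)
    (hnn0 : ∀ x, nn x = 0 ↔ x = 0)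
    (hnn_add : ∀ x y, nn (x + y) ≤ nn x + nn y)
    (hnn_smul : ∀ (c : ℝ) (x : EuclideanSpace ℝ (Fin n)), nn (c • x) = |c| * nn x)
    (X : Set (EuclideanSpace ℝ (Fin n))) (hX : Convex ℝ X) (hX2 : X.Nontrivial)
    (D : EuclideanSpace ℝ (Fin n) → EuclideanSpace ℝ (Fin n) → ℝ)
    (hD : ∀ y x, D y x = (1 / 2) * (nn (y - x)) ^ 2)
    (f : EuclideanSpace ℝ (Fin n) → ℝ)
    (hf : ∀ x, f x = (1 / 2) * ‖A x - b‖ ^ 2)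
    (f' : EuclideanSpace ℝ (Fin n) → EuclideanSpace ℝ (Fin n))
    (hf' : ∀ x, HasGradientAt f (f' x) x) :
    sInf {L : ℝ | 0 < L ∧ ∀ x ∈ X, ∀ y ∈ X,
        f y - f x - ⟪f' x, y - x⟫ ≤ L * D y x}
      = (sSup {r : ℝ | ∃ x ∈ (Submodule.span ℝ {d | ∃ u ∈ X, ∃ v ∈ X, d = u - v} :
          Set (EuclideanSpace ℝ (Fin n))), nn x ≤ 1 ∧ r = ‖A x‖}) ^ 2 := by
  let p : Seminorm ℝ (EuclideanSpace ℝ (Fin n)) :=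
    Seminorm.of nn hnn_add fun c x ↦ by rw [hnn_smul, Real.norm_eq_abs]
  let q : Seminorm ℝ (EuclideanSpace ℝ (Fin n)) := (normSeminorm ℝ _).comp A
  obtain ⟨C, hC⟩ := A.exists_norm_apply_le_mul_seminorm p fun x ↦ (hnn0 x).mp
  have hV : {d | ∃ u ∈ X, ∃ v ∈ X, d = u - v} = X - X := by ext; simp [Set.mem_sub, eq_comm]
  rw [hV]
  set M := sSup {r : ℝ | ∃ x ∈ (span ℝ (X - X) : Set (EuclideanSpace ℝ (Fin n))),
    nn x ≤ 1 ∧ r = ‖A x‖}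
  have hM : 0 ≤ M := Real.sSup_nonneg (by rintro _ ⟨x, -, -, rfl⟩; exact norm_nonneg _)
  have hbregman (x y : EuclideanSpace ℝ (Fin n)) :
      f y - f x - ⟪f' x, y - x⟫ = 1 / 2 * q (y - x) ^ 2 := by
    obtain rfl : f = fun x ↦ 1 / 2 * ‖A x - b‖ ^ 2 := funext hf
    exact bregman_half_norm_sq_sub (A := A.toContinuousLinearMap) (hf' x) y
  have hmem (L : ℝ) (hL : 0 < L) :
      (∀ x ∈ X, ∀ y ∈ X, f y - f x - ⟪f' x, y - x⟫ ≤ L * D y x) ↔ M ^ 2 ≤ L := by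
    calc _ ↔ ∀ x ∈ X, ∀ y ∈ X, q (y - x) ≤ √L * p (y - x) := by
          refine forall₂_congr fun x _ ↦ forall₂_congr fun y _ ↦ ?_
          rw [hbregman, hD]
          exact Real.half_sq_le_mul_half_sq_iff (apply_nonneg q _) (apply_nonneg p _) hL.le
      _ ↔ ∀ s ∈ span ℝ (X - X), q s ≤ √L * p s :=
          hX.forall_sub_le_mul_iff_forall_mem_span hX2.nonempty
      _ ↔ M ≤ √L := Seminorm.forall_le_mul_iff_sSup_le (fun x _ ↦ hC x) (Real.sqrt_nonneg L)
      _ ↔ M ^ 2 ≤ L := Real.le_sqrt hM hL.le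
  rw [show {L : ℝ | 0 < L ∧ _} = {L | 0 < L ∧ M ^ 2 ≤ L} from
    ext fun L ↦ and_congr_right (hmem L), Real.sInf_setOf_pos_and_le (sq_nonneg M)]
end

section
/- Let ℝ^n and ℝ^m be endowed with norms, let A ∈ ℝ^{m×n}, let X ⊆ ℝ^n be a convex set containing more than one point, and let D : X × X → ℝ be a distance-like function satisfying D(y,x) ≥ (1/2)‖y − x‖² for all x,y ∈ X. If g : ℝ^m → ℝ is convex, differentiable and L_g-smooth for the norm on ℝ^m, then f := g ∘ A satisfies D_f(y,x) ≤ L_g·‖A|span(X−X)‖²·D(y,x) for all x,y ∈ X, where span(X−X) is the linear span of {x − y : x,y ∈ X}. -/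
noncomputable section
open scoped RealInnerProductSpace
open Set


-- auxiliary lemmas about abstract norms on Euclidean space

lemma normlike_zero {k : ℕ} (p : EuclideanSpace ℝ (Fin k) → ℝ)
    (hsmul : ∀ (c : ℝ) x, p (c • x) = |c| * p x) : p 0 = 0 := by
  simpa using hsmul 0 0

lemma normlike_nonneg {k : ℕ} (p : EuclideanSpace ℝ (Fin k) → ℝ)
    (hadd : ∀ x y, p (x + y) ≤ p x + p y)
    (hsmul : ∀ (c : ℝ) x, p (c • x) = |c| * p x) : ∀ x, 0 ≤ p x := by
  intro x
  have h0 : p 0 = 0 := normlike_zero p hsmul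
  have h1 := hadd x (-x)
  have h2 : p (-x) = p x := by
    have := hsmul (-1) x; simpa using this
  have h3 : p (x + -x) = 0 := by simpa using h0
  linarith

lemma normlike_sum {k : ℕ} (p : EuclideanSpace ℝ (Fin k) → ℝ)
    (hadd : ∀ x y, p (x + y) ≤ p x + p y)
    (hsmul : ∀ (c : ℝ) x, p (c • x) = |c| * p x)
    {ι : Type*} (s : Finset ι) (v : ι → EuclideanSpace ℝ (Fin k)) :
    p (∑ i ∈ s, v i) ≤ ∑ i ∈ s, p (v i) := by
  classical
  induction s using Finset.cons_induction with
  | empty => simp [normlike_zero p hsmul]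
  | cons a s ha ih =>
    rw [Finset.sum_cons, Finset.sum_cons]
    calc p (v a + ∑ i ∈ s, v i) ≤ p (v a) + p (∑ i ∈ s, v i) := hadd _ _
      _ ≤ p (v a) + ∑ i ∈ s, p (v i) := by linarith

lemma normlike_upper {k : ℕ} (p : EuclideanSpace ℝ (Fin k) → ℝ)
    (hadd : ∀ x y, p (x + y) ≤ p x + p y)
    (hsmul : ∀ (c : ℝ) x, p (c • x) = |c| * p x) :
    ∃ C : ℝ, 0 < C ∧ ∀ x, p x ≤ C * ‖x‖ := by
  classical
  set b := EuclideanSpace.basisFun (Fin k) ℝ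
  refine ⟨(∑ i, p (b i)) + 1, ?_, ?_⟩
  · have : 0 ≤ ∑ i, p (b i) :=
      Finset.sum_nonneg fun i _ => normlike_nonneg p hadd hsmul _
    linarith
  · intro x
    have hrepr : ∑ i, ⟪b i, x⟫ • b i = x := b.sum_repr' x
    calc p x = p (∑ i, ⟪b i, x⟫ • b i) := by rw [hrepr]
      _ ≤ ∑ i, p (⟪b i, x⟫ • b i) := normlike_sum p hadd hsmul _ _
      _ = ∑ i, |⟪b i, x⟫| * p (b i) := by simp [hsmul]
      _ ≤ ∑ i, ‖x‖ * p (b i) := by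
          refine Finset.sum_le_sum fun i _ => ?_
          have h1 : |⟪b i, x⟫| ≤ ‖(b i : EuclideanSpace ℝ (Fin k))‖ * ‖x‖ :=
            abs_real_inner_le_norm _ _
          have h2 : ‖(b i : EuclideanSpace ℝ (Fin k))‖ = 1 := b.orthonormal.1 i
          have h3 := normlike_nonneg p hadd hsmul (b i)
          rw [h2, one_mul] at h1
          exact mul_le_mul_of_nonneg_right h1 h3
      _ = (∑ i, p (b i)) * ‖x‖ := by
          rw [Finset.sum_mul]; exact Finset.sum_congr rfl fun i _ => mul_comm _ _
      _ ≤ ((∑ i, p (b i)) + 1) * ‖x‖ := by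
          have := norm_nonneg x; nlinarith

lemma normlike_continuous {k : ℕ} (p : EuclideanSpace ℝ (Fin k) → ℝ)
    (hadd : ∀ x y, p (x + y) ≤ p x + p y)
    (hsmul : ∀ (c : ℝ) x, p (c • x) = |c| * p x) : Continuous p := by
  obtain ⟨C, hC, hCle⟩ := normlike_upper p hadd hsmul
  have : LipschitzWith (Real.toNNReal C) p := by
    refine LipschitzWith.of_dist_le_mul fun x y => ?_
    rw [Real.dist_eq, dist_eq_norm]
    have hxy : p x - p y ≤ p (x - y) := by
      have := hadd (x - y) y; simp at this; linarith
    have hyx : p y - p x ≤ p (x - y) := by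
      have := hadd (y - x) x
      have hneg : p (y - x) = p (x - y) := by
        simpa using hsmul (-1) (x - y)
      simp at this; linarith
    have hle : p (x - y) ≤ C * ‖x - y‖ := hCle _
    have hcoe : (Real.toNNReal C : ℝ) = C := Real.coe_toNNReal C hC.le
    rw [abs_sub_le_iff, hcoe]
    exact ⟨hxy.trans hle, hyx.trans hle⟩
  exact this.continuous

lemma normlike_lower {k : ℕ} (p : EuclideanSpace ℝ (Fin k) → ℝ)
    (h0 : ∀ x, p x = 0 ↔ x = 0)
    (hadd : ∀ x y, p (x + y) ≤ p x + p y)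
    (hsmul : ∀ (c : ℝ) x, p (c • x) = |c| * p x) :
    ∃ c : ℝ, 0 < c ∧ ∀ x, c * ‖x‖ ≤ p x := by
  by_cases hs : ∃ x : EuclideanSpace ℝ (Fin k), x ≠ 0
  · obtain ⟨x0, hx0⟩ := hs
    have hsph : (Metric.sphere (0 : EuclideanSpace ℝ (Fin k)) 1).Nonempty := by
      refine ⟨‖x0‖⁻¹ • x0, ?_⟩
      simp [norm_smul, abs_inv, inv_mul_cancel₀ (norm_ne_zero_iff.mpr hx0)]
    obtain ⟨z, hz, hzmin⟩ := (isCompact_sphere (0 : EuclideanSpace ℝ (Fin k)) 1).exists_isMinOn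
      hsph ((normlike_continuous p hadd hsmul).continuousOn)
    have hznorm : ‖z‖ = 1 := mem_sphere_zero_iff_norm.mp hz
    have hzne : z ≠ 0 := by intro h; rw [h] at hznorm; simp at hznorm
    have hc : 0 < p z := by
      rcases lt_or_eq_of_le (normlike_nonneg p hadd hsmul z) with h | h
      · exact h
      · exact absurd ((h0 z).mp h.symm) hzne
    refine ⟨p z, hc, fun x => ?_⟩
    by_cases hx : x = 0
    · simp [hx, normlike_zero p hsmul]
    · have hnx : (0:ℝ) < ‖x‖ := norm_pos_iff.mpr hx
      have hw : ‖x‖⁻¹ • x ∈ Metric.sphere (0 : EuclideanSpace ℝ (Fin k)) 1 := by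
        simp [norm_smul, abs_inv, inv_mul_cancel₀ hnx.ne']
      have hmin : p z ≤ p (‖x‖⁻¹ • x) := hzmin hw
      have hpw : p (‖x‖⁻¹ • x) = ‖x‖⁻¹ * p x := by
        rw [hsmul]; congr 1; exact abs_of_pos (by positivity)
      rw [hpw] at hmin
      calc p z * ‖x‖ ≤ (‖x‖⁻¹ * p x) * ‖x‖ := by nlinarith
        _ = p x := by field_simp
  · push_neg at hs
    refine ⟨1, one_pos, fun x => ?_⟩
    simp [hs x, normlike_zero p hsmul]

set_option maxHeartbeats 1000000 in
/-- if g is L_g-smooth then f = g ∘ A satisfies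
D_f(y,x) ≤ L_g·‖A|span(X−X)‖²·D(y,x) on X, whenever D(y,x) ≥ (1/2)‖y − x‖². -/
theorem relative_smoothness_of_composition {m n : ℕ}
    (nn : EuclideanSpace ℝ (Fin n) → ℝ)
    (hnn0 : ∀ x, nn x = 0 ↔ x = 0)
    (hnn_add : ∀ x y, nn (x + y) ≤ nn x + nn y)
    (hnn_smul : ∀ (c : ℝ) (x : EuclideanSpace ℝ (Fin n)), nn (c • x) = |c| * nn x)
    (nm : EuclideanSpace ℝ (Fin m) → ℝ)
    (hnm0 : ∀ u, nm u = 0 ↔ u = 0)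
    (hnm_add : ∀ u v, nm (u + v) ≤ nm u + nm v)
    (hnm_smul : ∀ (c : ℝ) (u : EuclideanSpace ℝ (Fin m)), nm (c • u) = |c| * nm u)
    (A : EuclideanSpace ℝ (Fin n) →ₗ[ℝ] EuclideanSpace ℝ (Fin m))
    (X : Set (EuclideanSpace ℝ (Fin n))) (hX : Convex ℝ X) (hX2 : X.Nontrivial)
    (D : EuclideanSpace ℝ (Fin n) → EuclideanSpace ℝ (Fin n) → ℝ)
    (hD0 : ∀ x ∈ X, D x x = 0)
    (hDnn : ∀ x ∈ X, ∀ y ∈ X, 0 ≤ D y x)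
    (hDlower : ∀ x ∈ X, ∀ y ∈ X, (1 / 2) * (nn (y - x)) ^ 2 ≤ D y x)
    (g : EuclideanSpace ℝ (Fin m) → ℝ)
    (g' : EuclideanSpace ℝ (Fin m) → EuclideanSpace ℝ (Fin m))
    (hgconv : ConvexOn ℝ Set.univ g)
    (hgdiff : ∀ u, HasGradientAt g (g' u) u)
    (Lg : ℝ) (hLg : 0 < Lg)
    (hgsmooth : ∀ u v, g v - g u - ⟪g' u, v - u⟫ ≤ (Lg / 2) * (nm (v - u)) ^ 2)
    (f : EuclideanSpace ℝ (Fin n) → ℝ) (hf : ∀ x, f x = g (A x))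
    (f' : EuclideanSpace ℝ (Fin n) → EuclideanSpace ℝ (Fin n))
    (hf' : ∀ x, HasGradientAt f (f' x) x) :
    ∀ x ∈ X, ∀ y ∈ X,
      f y - f x - ⟪f' x, y - x⟫ ≤
        Lg * (sSup {r : ℝ | ∃ x ∈ (Submodule.span ℝ {d | ∃ u ∈ X, ∃ v ∈ X, d = u - v} :
          Set (EuclideanSpace ℝ (Fin n))), nn x ≤ 1 ∧ r = nm (A x)}) ^ 2 * D y x := by
  intro x hx y hy
  set V : Submodule ℝ (EuclideanSpace ℝ (Fin n)) :=
    Submodule.span ℝ {d | ∃ u ∈ X, ∃ v ∈ X, d = u - v} with hV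
  set S : Set ℝ := {r : ℝ | ∃ x ∈ (V : Set (EuclideanSpace ℝ (Fin n))), nn x ≤ 1 ∧ r = nm (A x)}
    with hS
  set M : ℝ := sSup S with hM
  -- basic norm facts
  have hnn_nonneg := normlike_nonneg nn hnn_add hnn_smul
  have hnm_nonneg := normlike_nonneg nm hnm_add hnm_smul
  have hnn_zero : nn 0 = 0 := normlike_zero nn hnn_smul
  have hnm_zero : nm 0 = 0 := normlike_zero nm hnm_smul
  obtain ⟨C, hC, hCle⟩ := normlike_upper nm hnm_add hnm_smul
  obtain ⟨c, hc, hcle⟩ := normlike_lower nn hnn0 hnn_add hnn_smul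
  set Acl : EuclideanSpace ℝ (Fin n) →L[ℝ] EuclideanSpace ℝ (Fin m) :=
    LinearMap.toContinuousLinearMap A with hAcl
  have hAclfun : ⇑Acl = ⇑A := LinearMap.coe_toContinuousLinearMap' A
  have hAclcoe : ∀ z, Acl z = A z := fun z => congrFun hAclfun z
  -- S is bounded above and contains 0
  have hbdd : BddAbove S := by
    refine ⟨C * ‖Acl‖ * (1 / c), fun r hr => ?_⟩
    obtain ⟨z, hzV, hz1, rfl⟩ := hr
    have h1 : nm (A z) ≤ C * ‖A z‖ := hCle _
    have h2 : ‖Acl z‖ ≤ ‖Acl‖ * ‖z‖ := Acl.le_opNorm z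
    have h3 : c * ‖z‖ ≤ nn z := hcle z
    have h4 : ‖z‖ ≤ 1 / c := by
      rw [le_div_iff₀ hc]; nlinarith
    have h5 : (0:ℝ) ≤ ‖Acl‖ := norm_nonneg _
    have h6 : (0:ℝ) ≤ ‖z‖ := norm_nonneg _
    have h7 : ‖A z‖ = ‖Acl z‖ := by rw [hAclcoe]
    calc nm (A z) ≤ C * ‖Acl z‖ := by rw [← h7]; exact h1
      _ ≤ C * (‖Acl‖ * ‖z‖) := mul_le_mul_of_nonneg_left h2 hC.le
      _ ≤ C * (‖Acl‖ * (1 / c)) := by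
          exact mul_le_mul_of_nonneg_left (mul_le_mul_of_nonneg_left h4 h5) hC.le
      _ = C * ‖Acl‖ * (1 / c) := by ring
  have h0S : (0:ℝ) ∈ S := by
    refine ⟨0, Submodule.zero_mem V, by simp [hnn_zero], ?_⟩
    simp [hnm_zero]
  have hM0 : 0 ≤ M := le_csSup hbdd h0S
  -- key scaling inequality on the span
  have key : ∀ d ∈ (V : Set (EuclideanSpace ℝ (Fin n))), nm (A d) ≤ M * nn d := by
    intro d hd
    by_cases hd0 : d = 0
    · simp [hd0, hnm_zero, hnn_zero]
    · have hpos : 0 < nn d := by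
        rcases lt_or_eq_of_le (hnn_nonneg d) with h | h
        · exact h
        · exact absurd ((hnn0 d).mp h.symm) hd0
      set w := (nn d)⁻¹ • d with hw
      have hwV : w ∈ (V : Set (EuclideanSpace ℝ (Fin n))) := V.smul_mem _ hd
      have hw1 : nn w = 1 := by
        rw [hw, hnn_smul, abs_of_pos (by positivity), inv_mul_cancel₀ hpos.ne']
      have hwS : nm (A w) ∈ S := ⟨w, hwV, le_of_eq hw1, rfl⟩
      have hwM : nm (A w) ≤ M := le_csSup hbdd hwS
      have hdw : d = nn d • w := by
        rw [hw, smul_smul, mul_inv_cancel₀ hpos.ne', one_smul]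
      calc nm (A d) = nm (A (nn d • w)) := by rw [← hdw]
        _ = nn d * nm (A w) := by
            rw [map_smul, hnm_smul, abs_of_pos hpos]
        _ ≤ nn d * M := by nlinarith
        _ = M * nn d := mul_comm _ _
  -- gradient of the composition
  have hfun : f = g ∘ (A : EuclideanSpace ℝ (Fin n) → EuclideanSpace ℝ (Fin m)) :=
    funext fun z => hf z
  have hA : HasFDerivAt (A : EuclideanSpace ℝ (Fin n) → EuclideanSpace ℝ (Fin m)) Acl x := by
    have := Acl.hasFDerivAt (x := x)
    rwa [hAclfun] at this
  have hgF := (hgdiff (A x)).hasFDerivAt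
  have hcomp : HasFDerivAt f
      (((InnerProductSpace.toDual ℝ _) (g' (A x)) : EuclideanSpace ℝ (Fin m) →L[ℝ] ℝ).comp Acl)
      x := by
    rw [hfun]
    exact hgF.comp x hA
  have heq := (hf' x).hasFDerivAt.unique hcomp
  have hinner : ⟪f' x, y - x⟫ = ⟪g' (A x), A y - A x⟫ := by
    have := congrArg (fun L : EuclideanSpace ℝ (Fin n) →L[ℝ] ℝ => L (y - x)) heq
    simp only [ContinuousLinearMap.comp_apply, InnerProductSpace.toDual_apply_apply] at this
    rw [this, hAclcoe, map_sub]
  -- put everything together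
  have hdV : y - x ∈ (V : Set (EuclideanSpace ℝ (Fin n))) :=
    Submodule.subset_span ⟨y, hy, x, hx, rfl⟩
  have hkey : nm (A (y - x)) ≤ M * nn (y - x) := key _ hdV
  have hsq : (nm (A (y - x))) ^ 2 ≤ M ^ 2 * (nn (y - x)) ^ 2 := by
    have h1 := hnm_nonneg (A (y - x))
    nlinarith [hnn_nonneg (y - x)]
  have hsm := hgsmooth (A x) (A y)
  have hAsub : A y - A x = A (y - x) := (map_sub A y x).symm
  have hD := hDlower x hx y hy
  calc f y - f x - ⟪f' x, y - x⟫
      = g (A y) - g (A x) - ⟪g' (A x), A y - A x⟫ := by rw [hf x, hf y, hinner]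
    _ ≤ (Lg / 2) * (nm (A y - A x)) ^ 2 := hsm
    _ = (Lg / 2) * (nm (A (y - x))) ^ 2 := by rw [hAsub]
    _ ≤ (Lg / 2) * (M ^ 2 * (nn (y - x)) ^ 2) := by nlinarith
    _ = Lg * M ^ 2 * ((1 / 2) * (nn (y - x)) ^ 2) := by ring
    _ ≤ Lg * M ^ 2 * D y x :=
        mul_le_mul_of_nonneg_left hD (by positivity)
end
end

section
/- Let ℝ^n and ℝ^m be endowed with norms, let A ∈ ℝ^{m×n}, and let X ⊆ ℝ^n be a convex cone such that A(X) is a linear subspace of ℝ^m containing more than one point. Then 1/‖(A|X)^{-1}‖ = inf { ‖Ay − Ax‖ / ‖Z_{A,X}(y) − x‖ : x,y ∈ X, x ∉ Z_{A,X}(y) }. -/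
/-!
Let `F v` be the infimum of `‖x‖` over `x ∈ X` with `A x = v`, so that `‖(A|X)⁻¹‖` is the
supremum `S` of `F` over the unit ball of `A(X)`. As `X` is a convex cone, `F` is positively
homogeneous, so `F v ≤ S ‖v‖` on `A(X)`; and `X + X ⊆ X` gives
`‖Z_{A,X}(y) − x‖ ≤ F (A y − A x)`, so every ratio is at least `1 / S`. Conversely, take
`y ∈ X` with `A y = v` and `x₀ ∈ X` with `A x₀ = 0` (it exists since `A(X)` is a subspace):
then `‖Z_{A,X}(y) − t x₀‖ ≥ F v − t ‖x₀‖`, so as `t → 0` the ratios approach `‖v‖ / F v`.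
Equivalence of norms in finite dimension keeps the distances `‖Z_{A,X}(y) − x‖` positive; in the
unbounded case both sides are `0` under the conventions `sSup = 0` and `1 / 0 = 0`.
-/

noncomputable section

open Set Filter Topology

theorem Convex.add_mem_of_smul_mem {E : Type*} [AddCommGroup E] [Module ℝ E] {X : Set E}
    (hconv : Convex ℝ X) (hsmul : ∀ c : ℝ, 0 < c → ∀ x ∈ X, c • x ∈ X) {x y : E}
    (hx : x ∈ X) (hy : y ∈ X) : x + y ∈ X := by
  have hmid := hsmul 2 two_pos _ (hconv hx hy (by norm_num : (0 : ℝ) ≤ 1 / 2)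
    (by norm_num : (0 : ℝ) ≤ 1 / 2) (by norm_num))
  rwa [smul_add, smul_smul, smul_smul, mul_one_div_cancel two_ne_zero, one_smul, one_smul]
    at hmid

namespace Seminorm

variable {E : Type*} [NormedAddCommGroup E] [NormedSpace ℝ E] [FiniteDimensional ℝ E]

theorem continuous_of_finiteDimensional (p : Seminorm ℝ E) : Continuous p :=
  continuousOn_univ.mp (p.convexOn.continuousOn isOpen_univ)

theorem exists_pos_mul_norm_le (p : Seminorm ℝ E) (hp : ∀ x, p x = 0 → x = 0) :
    ∃ ε, 0 < ε ∧ ∀ x, ε * ‖x‖ ≤ p x := by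
  cases subsingleton_or_nontrivial E
  · exact ⟨1, one_pos, fun x => by simp [Subsingleton.elim x 0]⟩
  obtain ⟨x₀, hx₀, hmin⟩ := (isCompact_sphere (0 : E) 1).exists_isMinOn
    (NormedSpace.sphere_nonempty.mpr zero_le_one) p.continuous_of_finiteDimensional.continuousOn
  have hx₀ : ‖x₀‖ = 1 := mem_sphere_zero_iff_norm.mp hx₀
  refine ⟨p x₀, (apply_nonneg p x₀).lt_of_ne fun h => ?_, fun x => ?_⟩
  · simp [hp x₀ h.symm] at hx₀
  rcases eq_or_ne x 0 with rfl | hx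
  · simp
  have hx' : ‖x‖⁻¹ • x ∈ Metric.sphere (0 : E) 1 := by simp [norm_smul, hx]
  have hle : p x₀ ≤ ‖x‖⁻¹ * p x := by simpa [map_smul_eq_mul] using hmin hx'
  rwa [le_inv_mul_iff₀ (norm_pos_iff.mpr hx), mul_comm] at hle

theorem exists_le_mul_of_definite (p q : Seminorm ℝ E) (hp : ∀ x, p x = 0 → x = 0) :
    ∃ K, 0 ≤ K ∧ ∀ x, q x ≤ K * p x := by
  obtain ⟨C, hC, hqC⟩ := q.bound_of_continuous_normedSpace q.continuous_of_finiteDimensional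
  obtain ⟨ε, hε, hpε⟩ := p.exists_pos_mul_norm_le hp
  refine ⟨C / ε, by positivity, fun x => ?_⟩
  calc q x ≤ C * ‖x‖ := hqC x
    _ = C / ε * (ε * ‖x‖) := by field_simp
    _ ≤ C / ε * p x := by gcongr; exact hpε x

end Seminorm

theorem one_div_sSup_eq_sInf_of_mul_bounds {P Q : Set ℝ} (hP : P.Nonempty) (hQ : Q.Nonempty)
    (hQ₀ : ∀ r ∈ Q, 0 ≤ r) (hPQ : ∀ s ∈ P, sInf Q * s ≤ 1)
    (hQP : BddAbove P → ∀ r ∈ Q, 1 ≤ sSup P * r) : 1 / sSup P = sInf Q := by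
  have hμ₀ : 0 ≤ sInf Q := Real.sInf_nonneg hQ₀
  by_cases hbdd : BddAbove P
  · obtain ⟨r₀, hr₀⟩ := hQ
    have hS : 0 < sSup P := by
      by_contra! h
      linarith [hQP hbdd r₀ hr₀, mul_nonpos_of_nonpos_of_nonneg h (hQ₀ r₀ hr₀)]
    have hle : 1 / sSup P ≤ sInf Q :=
      le_csInf ⟨r₀, hr₀⟩ fun r hr => by rw [div_le_iff₀' hS]; exact hQP hbdd r hr
    have hμ : 0 < sInf Q := (one_div_pos.mpr hS).trans_le hle
    refine hle.antisymm ?_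
    rw [le_div_iff₀' hS, ← le_div_iff₀ hμ]
    exact csSup_le hP fun s hs => by rw [le_div_iff₀' hμ]; exact hPQ s hs
  · rw [Real.sSup_of_not_bddAbove hbdd, div_zero]
    refine hμ₀.antisymm ?_
    by_contra! hμ
    exact hbdd ⟨1 / sInf Q, fun s hs => by rw [le_div_iff₀' hμ]; exact hPQ s hs⟩

section Fibers

variable {E F : Type*} [AddCommGroup E] [Module ℝ E] [AddCommGroup F] [Module ℝ F]

-- `distToFiber p A X y x` is `‖Z_{A,X}(y) − x‖`, and `‖(A|X)⁻¹‖` is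
-- `sSup (preimageNormsOfUnitBall p q A X)`.
def preimageNorm (p : E → ℝ) (A : E →ₗ[ℝ] F) (X : Set E) (v : F) : ℝ :=
  sInf {s | ∃ x ∈ X, A x = v ∧ s = p x}

def fiber (A : E →ₗ[ℝ] F) (X : Set E) (y : E) : Set E :=
  {z | z ∈ X ∧ A z = A y}

def distToFiber (p : E → ℝ) (A : E →ₗ[ℝ] F) (X : Set E) (y x : E) : ℝ :=
  sInf {s | ∃ z ∈ fiber A X y, s = p (z - x)}

def preimageNormsOfUnitBall (p : E → ℝ) (q : F → ℝ) (A : E →ₗ[ℝ] F) (X : Set E) : Set ℝ :=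
  {r | ∃ v ∈ A '' X, q v ≤ 1 ∧ r = preimageNorm p A X v}

def fiberDistanceRatios (p : E → ℝ) (q : F → ℝ) (A : E →ₗ[ℝ] F) (X : Set E) : Set ℝ :=
  {r | ∃ y ∈ X, ∃ x ∈ X, x ∉ fiber A X y ∧ r = q (A y - A x) / distToFiber p A X y x}

variable {p : Seminorm ℝ E} {q : Seminorm ℝ F} {A : E →ₗ[ℝ] F} {X : Set E}
  {C : ConvexCone ℝ E} {W : Submodule ℝ F}

theorem distToFiber_nonneg (y x : E) : 0 ≤ distToFiber p A X y x :=
  Real.sInf_nonneg <| by rintro _ ⟨z, -, rfl⟩; exact apply_nonneg p _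

theorem nonneg_of_mem_fiberDistanceRatios {r : ℝ} (hr : r ∈ fiberDistanceRatios p q A X) :
    0 ≤ r := by
  obtain ⟨y, -, x, -, -, rfl⟩ := hr
  exact div_nonneg (apply_nonneg q _) (distToFiber_nonneg y x)

theorem preimageNorm_le {x : E} (hx : x ∈ X) : preimageNorm p A X (A x) ≤ p x :=
  csInf_le ⟨0, by rintro _ ⟨x, -, -, rfl⟩; exact apply_nonneg p x⟩ ⟨x, hx, rfl, rfl⟩

theorem le_distToFiber {K : ℝ} (hK₀ : 0 ≤ K) (hK : ∀ x, q (A x) ≤ K * p x) {y : E}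
    (hy : y ∈ X) (x : E) : q (A y - A x) ≤ K * distToFiber p A X y x := by
  rw [distToFiber, ← smul_eq_mul, ← Real.sInf_smul_of_nonneg hK₀]
  refine le_csInf ⟨K * p (y - x), p (y - x), ⟨y, ⟨hy, rfl⟩, rfl⟩, rfl⟩ ?_
  rintro _ ⟨_, ⟨z, ⟨-, hzy⟩, rfl⟩, rfl⟩
  simpa [hzy] using hK (z - x)

theorem preimageNorm_sub_le_distToFiber {y : E} (hy : y ∈ X) (x : E) :
    preimageNorm p A X (A y) - p x ≤ distToFiber p A X y x := by
  refine le_csInf ⟨p (y - x), y, ⟨hy, rfl⟩, rfl⟩ ?_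
  rintro _ ⟨z, ⟨hz, hzy⟩, rfl⟩
  have hz' : preimageNorm p A X (A y) ≤ p z := hzy ▸ preimageNorm_le hz
  have htri := map_add_le_add p (z - x) x
  rw [sub_add_cancel] at htri
  linarith

theorem distToFiber_le_preimageNorm {x y : E} (hx : x ∈ C) (hv : A y - A x ∈ A '' C) :
    distToFiber p A C y x ≤ preimageNorm p A C (A y - A x) := by
  obtain ⟨w, hw, hwv⟩ := hv
  refine le_csInf ⟨p w, w, hw, hwv, rfl⟩ ?_
  rintro _ ⟨w, hw, hwv, rfl⟩
  refine csInf_le ⟨0, by rintro _ ⟨z, -, rfl⟩; exact apply_nonneg p _⟩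
    ⟨w + x, ⟨C.add_mem hw hx, by simp [hwv]⟩, by simp⟩

theorem preimageNorm_smul {c : ℝ} (hc : 0 < c) (v : F) :
    preimageNorm p A C (c • v) = c * preimageNorm p A C v := by
  rw [preimageNorm, preimageNorm, ← smul_eq_mul, ← Real.sInf_smul_of_nonneg hc.le]
  congr 1
  ext s
  simp only [mem_ofPred_eq, mem_smul_set, smul_eq_mul]
  constructor
  · rintro ⟨x, hx, hxv, rfl⟩
    refine ⟨p (c⁻¹ • x), ⟨c⁻¹ • x, C.smul_mem (inv_pos.mpr hc) hx, ?_, rfl⟩, ?_⟩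
    · rw [map_smul, hxv, inv_smul_smul₀ hc.ne']
    · rw [map_smul_eq_mul, Real.norm_eq_abs, abs_of_pos (inv_pos.mpr hc),
        mul_inv_cancel_left₀ hc.ne']
  · rintro ⟨_, ⟨x, hx, hxv, rfl⟩, rfl⟩
    refine ⟨c • x, C.smul_mem hc hx, by rw [map_smul, hxv], ?_⟩
    rw [map_smul_eq_mul, Real.norm_eq_abs, abs_of_pos hc]

theorem preimageNorm_zero : preimageNorm p A C 0 = 0 := by
  have h := preimageNorm_smul (p := p) (A := A) (C := C) two_pos 0
  rw [smul_zero] at h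
  linarith

theorem sInf_fiberDistanceRatios_mul_preimageNorm_le (hW : A '' C = W) {v : F}
    (hv : v ∈ A '' C) : sInf (fiberDistanceRatios p q A C) * preimageNorm p A C v ≤ q v := by
  set μ := sInf (fiberDistanceRatios p q A C)
  have hμ₀ : 0 ≤ μ := Real.sInf_nonneg fun r hr => nonneg_of_mem_fiberDistanceRatios hr
  rcases eq_or_ne v 0 with rfl | hv₀
  · simp [preimageNorm_zero]
  obtain ⟨y, hy, rfl⟩ := hv
  obtain ⟨x₀, hx₀, hAx₀⟩ : (0 : F) ∈ A '' C := hW ▸ W.zero_mem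
  have hbound : ∀ t > 0, μ * (preimageNorm p A C (A y) - t * p x₀) ≤ q (A y) := by
    intro t ht
    have hD := preimageNorm_sub_le_distToFiber (p := p) (A := A) hy (t • x₀)
    rw [map_smul_eq_mul, Real.norm_eq_abs, abs_of_pos ht] at hD
    rcases le_or_gt (preimageNorm p A C (A y) - t * p x₀) 0 with h | h
    · exact (mul_nonpos_of_nonneg_of_nonpos hμ₀ h).trans (apply_nonneg q _)
    have hAtx₀ : A (t • x₀) = 0 := by rw [map_smul, hAx₀, smul_zero]
    have hr : q (A y) / distToFiber p A C y (t • x₀) ∈ fiberDistanceRatios p q A C :=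
      ⟨y, hy, t • x₀, C.smul_mem ht hx₀, fun h => hv₀ (h.2 ▸ hAtx₀), by rw [hAtx₀, sub_zero]⟩
    have hμr : μ ≤ q (A y) / distToFiber p A C y (t • x₀) :=
      csInf_le ⟨0, fun r hr => nonneg_of_mem_fiberDistanceRatios hr⟩ hr
    calc μ * (preimageNorm p A C (A y) - t * p x₀) ≤ μ * distToFiber p A C y (t • x₀) :=
          mul_le_mul_of_nonneg_left hD hμ₀
      _ ≤ q (A y) := (le_div_iff₀ (h.trans_le hD)).mp hμr
  have hcont : Continuous fun t : ℝ => μ * (preimageNorm p A C (A y) - t * p x₀) := by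
    fun_prop
  have hlim : Tendsto (fun t => μ * (preimageNorm p A C (A y) - t * p x₀)) (𝓝[>] 0)
      (𝓝 (μ * preimageNorm p A C (A y))) :=
    tendsto_nhdsWithin_of_tendsto_nhds (by simpa using hcont.tendsto 0)
  exact le_of_tendsto hlim (eventually_nhdsWithin_of_forall hbound)

theorem preimageNorm_le_sSup_mul (hW : A '' C = W) (hq : ∀ v, q v = 0 → v = 0)
    (hbdd : BddAbove (preimageNormsOfUnitBall p q A C)) {v : F} (hv : v ∈ A '' C) :
    preimageNorm p A C v ≤ sSup (preimageNormsOfUnitBall p q A C) * q v := by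
  rcases eq_or_ne v 0 with rfl | hv₀
  · simp [preimageNorm_zero]
  have hqv : 0 < q v := (apply_nonneg q v).lt_of_ne fun h => hv₀ (hq v h.symm)
  set u := (q v)⁻¹ • v
  have hu : u ∈ A '' C := by rw [hW] at hv ⊢; exact W.smul_mem _ hv
  have hqu : q u = 1 := by
    rw [map_smul_eq_mul, norm_inv, Real.norm_eq_abs, abs_of_pos hqv, inv_mul_cancel₀ hqv.ne']
  have hvu : v = q v • u := by rw [smul_inv_smul₀ hqv.ne']
  have huP : preimageNorm p A C u ≤ sSup (preimageNormsOfUnitBall p q A C) :=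
    le_csSup hbdd ⟨u, hu, hqu.le, rfl⟩
  rw [hvu, preimageNorm_smul hqv, ← hvu, mul_comm]
  exact mul_le_mul_of_nonneg_right huP hqv.le

theorem one_le_sSup_mul_of_mem_fiberDistanceRatios (hW : A '' C = W)
    (hq : ∀ v, q v = 0 → v = 0) {K : ℝ} (hK₀ : 0 ≤ K) (hK : ∀ x, q (A x) ≤ K * p x)
    (hbdd : BddAbove (preimageNormsOfUnitBall p q A C)) {r : ℝ}
    (hr : r ∈ fiberDistanceRatios p q A C) :
    1 ≤ sSup (preimageNormsOfUnitBall p q A C) * r := by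
  obtain ⟨y, hy, x, hx, hxy, rfl⟩ := hr
  have hv : A y - A x ∈ A '' C := by
    have hAy : A y ∈ A '' C := ⟨y, hy, rfl⟩
    have hAx : A x ∈ A '' C := ⟨x, hx, rfl⟩
    rw [hW] at hAy hAx ⊢
    exact W.sub_mem hAy hAx
  have hqv : 0 < q (A y - A x) := (apply_nonneg q _).lt_of_ne fun h =>
    hxy ⟨hx, (sub_eq_zero.mp (hq _ h.symm)).symm⟩
  have hD : 0 < distToFiber p A C y x :=
    pos_of_mul_pos_right (hqv.trans_le (le_distToFiber hK₀ hK hy x)) hK₀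
  rw [mul_div_assoc', le_div_iff₀ hD, one_mul]
  exact (distToFiber_le_preimageNorm hx hv).trans (preimageNorm_le_sSup_mul hW hq hbdd hv)

theorem one_div_sSup_preimageNormsOfUnitBall_eq_sInf_fiberDistanceRatios
    (hW : A '' C = W) (hAC : (A '' C).Nontrivial) (hq : ∀ v, q v = 0 → v = 0) {K : ℝ}
    (hK₀ : 0 ≤ K) (hK : ∀ x, q (A x) ≤ K * p x) :
    1 / sSup (preimageNormsOfUnitBall p q A C) = sInf (fiberDistanceRatios p q A C) := by
  refine one_div_sSup_eq_sInf_of_mul_bounds ?_ ?_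
    (fun r hr => nonneg_of_mem_fiberDistanceRatios hr) ?_
    fun hbdd r hr => one_le_sSup_mul_of_mem_fiberDistanceRatios hW hq hK₀ hK hbdd hr
  · exact ⟨_, 0, hW ▸ W.zero_mem, by simp, rfl⟩
  · obtain ⟨_, ⟨y, hy, rfl⟩, _, ⟨x, hx, rfl⟩, hne⟩ := hAC
    exact ⟨_, y, hy, x, hx, fun h => hne h.2.symm, rfl⟩
  · rintro _ ⟨v, hv, hqv, rfl⟩
    exact (sInf_fiberDistanceRatios_mul_preimageNorm_le hW hv).trans hqv

end Fibers

/-- if X is a convex cone and A(X) is a linear subspace containing more than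
one point, then 1/‖(A|X)⁻¹‖ = inf over x,y ∈ X with x ∉ Z_{A,X}(y) of ‖Ay−Ax‖/‖Z_{A,X}(y)−x‖. -/
theorem inverse_norm_characterization_conic {m n : ℕ}
    (nn : EuclideanSpace ℝ (Fin n) → ℝ)
    (hnn0 : ∀ x, nn x = 0 ↔ x = 0)
    (hnn_add : ∀ x y, nn (x + y) ≤ nn x + nn y)
    (hnn_smul : ∀ (c : ℝ) (x : EuclideanSpace ℝ (Fin n)), nn (c • x) = |c| * nn x)
    (nm : EuclideanSpace ℝ (Fin m) → ℝ)
    (hnm0 : ∀ u, nm u = 0 ↔ u = 0)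
    (hnm_add : ∀ u v, nm (u + v) ≤ nm u + nm v)
    (hnm_smul : ∀ (c : ℝ) (u : EuclideanSpace ℝ (Fin m)), nm (c • u) = |c| * nm u)
    (A : EuclideanSpace ℝ (Fin n) →ₗ[ℝ] EuclideanSpace ℝ (Fin m))
    (X : Set (EuclideanSpace ℝ (Fin n)))
    (hXconv : Convex ℝ X)
    (hXcone : ∀ (c : ℝ), 0 < c → ∀ x ∈ X, c • x ∈ X)
    (hAX : ∃ W : Submodule ℝ (EuclideanSpace ℝ (Fin m)), A '' X = (W : Set (EuclideanSpace ℝ (Fin m))))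
    (hAX2 : (A '' X).Nontrivial) :
    1 / sSup {r : ℝ | ∃ v ∈ A '' X, nm v ≤ 1 ∧ r = sInf {s | ∃ x ∈ X, A x = v ∧ s = nn x}}
      = sInf {r : ℝ | ∃ y ∈ X, ∃ x ∈ X, x ∉ {z | z ∈ X ∧ A z = A y} ∧
          r = nm (A y - A x) / sInf {s | ∃ z ∈ {z | z ∈ X ∧ A z = A y}, s = nn (z - x)}} := by
  obtain ⟨W, hW⟩ := hAX
  let p : Seminorm ℝ (EuclideanSpace ℝ (Fin n)) :=
    Seminorm.of nn hnn_add fun c x => by rw [hnn_smul, Real.norm_eq_abs]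
  let q : Seminorm ℝ (EuclideanSpace ℝ (Fin m)) :=
    Seminorm.of nm hnm_add fun c u => by rw [hnm_smul, Real.norm_eq_abs]
  let C : ConvexCone ℝ (EuclideanSpace ℝ (Fin n)) :=
    ⟨X, fun c hc x hx => hXcone c hc x hx,
      fun _ hx _ hy => hXconv.add_mem_of_smul_mem hXcone hx hy⟩
  obtain ⟨K, hK₀, hK⟩ := p.exists_le_mul_of_definite (q.comp A) fun x hx => (hnn0 x).mp hx
  exact one_div_sSup_preimageNormsOfUnitBall_eq_sInf_fiberDistanceRatios (p := p) (q := q)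
    (C := C) hW hAX2 (fun u hu => (hnm0 u).mp hu) hK₀ hK
end
end

section
/- Let ℝ^n and ℝ^m be endowed with norms, let D : X × X → ℝ be a distance-like function satisfying D(y,x) ≤ (1/2)‖y − x‖² for all x,y ∈ X, let A ∈ ℝ^{m×n}, let g : ℝ^m → ℝ be convex, differentiable and μ_g-strongly convex for the norm on ℝ^m, and let X ⊆ ℝ^n be a convex cone such that A(X) is a linear subspace containing more than one point. Then f := g ∘ A is (μ_g/‖(A|X)^{-1}‖²)-strongly convex relative to (X,D), i.e., D_f(Z_{f,X}(y),x) ≥ (μ_g/‖(A|X)^{-1}‖²)·D(Z_{f,X}(y),x) for all x,y ∈ X. -/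
noncomputable section
open scoped RealInnerProductSpace
open Set

set_option maxHeartbeats 1000000

/-- Theorem thm.conic: if g is μ_g-strongly convex, X is a convex cone and
A(X) is a linear subspace containing more than one point, then f = g ∘ A is
(μ_g/‖(A|X)⁻¹‖²)-strongly convex relative to (X, D) whenever D(y,x) ≤ (1/2)‖y−x‖². -/
theorem relative_strong_convexity_of_composition_conic {m n : ℕ}
    (nn : EuclideanSpace ℝ (Fin n) → ℝ)
    (hnn0 : ∀ x, nn x = 0 ↔ x = 0)
    (hnn_add : ∀ x y, nn (x + y) ≤ nn x + nn y)
    (hnn_smul : ∀ (c : ℝ) (x : EuclideanSpace ℝ (Fin n)), nn (c • x) = |c| * nn x)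
    (nm : EuclideanSpace ℝ (Fin m) → ℝ)
    (hnm0 : ∀ u, nm u = 0 ↔ u = 0)
    (hnm_add : ∀ u v, nm (u + v) ≤ nm u + nm v)
    (hnm_smul : ∀ (c : ℝ) (u : EuclideanSpace ℝ (Fin m)), nm (c • u) = |c| * nm u)
    (A : EuclideanSpace ℝ (Fin n) →ₗ[ℝ] EuclideanSpace ℝ (Fin m))
    (X : Set (EuclideanSpace ℝ (Fin n)))
    (hXconv : Convex ℝ X)
    (hXcone : ∀ (c : ℝ), 0 < c → ∀ x ∈ X, c • x ∈ X)
    (hAX : ∃ W : Submodule ℝ (EuclideanSpace ℝ (Fin m)), A '' X = (W : Set (EuclideanSpace ℝ (Fin m))))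
    (hAX2 : (A '' X).Nontrivial)
    (D : EuclideanSpace ℝ (Fin n) → EuclideanSpace ℝ (Fin n) → ℝ)
    (hD0 : ∀ x ∈ X, D x x = 0)
    (hDnn : ∀ x ∈ X, ∀ y ∈ X, 0 ≤ D y x)
    (hDupper : ∀ x ∈ X, ∀ y ∈ X, D y x ≤ (1 / 2) * (nn (y - x)) ^ 2)
    (g : EuclideanSpace ℝ (Fin m) → ℝ)
    (g' : EuclideanSpace ℝ (Fin m) → EuclideanSpace ℝ (Fin m))
    (hgconv : ConvexOn ℝ Set.univ g)
    (hgdiff : ∀ u, HasGradientAt g (g' u) u)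
    (μg : ℝ) (hμg : 0 < μg)
    (hgstrong : ∀ u v, (μg / 2) * (nm (v - u)) ^ 2 ≤ g v - g u - ⟪g' u, v - u⟫)
    (f : EuclideanSpace ℝ (Fin n) → ℝ) (hf : ∀ x, f x = g (A x))
    (f' : EuclideanSpace ℝ (Fin n) → EuclideanSpace ℝ (Fin n))
    (hf' : ∀ x, HasGradientAt f (f' x) x) :
    ∀ x ∈ X, ∀ y ∈ X,
      (μg / (sSup {r : ℝ | ∃ v ∈ A '' X, nm v ≤ 1 ∧
          r = sInf {s | ∃ x ∈ X, A x = v ∧ s = nn x}}) ^ 2) *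
          sInf {r | ∃ z, (z ∈ X ∧ f z = f y ∧ ⟪f' z - f' y, z - y⟫ = 0) ∧ r = D z x}
        ≤ sInf {r | ∃ z, (z ∈ X ∧ f z = f y ∧ ⟪f' z - f' y, z - y⟫ = 0) ∧
            r = f z - f x - ⟪f' x, z - x⟫} := by
  classical
  obtain ⟨W, hW⟩ := hAX
  -- nonnegativity of the norms
  have hnn_nonneg : ∀ x, 0 ≤ nn x := by
    intro x
    have h0 : nn (0 : EuclideanSpace ℝ (Fin n)) = 0 := (hnn0 0).mpr rfl
    have h1 := hnn_add x (-x)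
    have h2 : nn (-x) = nn x := by
      have := hnn_smul (-1) x
      simpa using this
    rw [add_neg_cancel, h0, h2] at h1
    linarith
  have hnm_nonneg : ∀ u, 0 ≤ nm u := by
    intro u
    have h0 : nm (0 : EuclideanSpace ℝ (Fin m)) = 0 := (hnm0 0).mpr rfl
    have h1 := hnm_add u (-u)
    have h2 : nm (-u) = nm u := by
      have := hnm_smul (-1) u
      simpa using this
    rw [add_neg_cancel, h0, h2] at h1
    linarith
  -- X is closed under addition
  have hXadd : ∀ a ∈ X, ∀ b ∈ X, a + b ∈ X := by
    intro a ha b hb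
    have hmid : (1/2 : ℝ) • a + (1/2 : ℝ) • b ∈ X :=
      hXconv ha hb (by norm_num) (by norm_num) (by norm_num)
    have h2 : (2 : ℝ) • ((1/2 : ℝ) • a + (1/2 : ℝ) • b) ∈ X :=
      hXcone 2 two_pos _ hmid
    have : (2 : ℝ) • ((1/2 : ℝ) • a + (1/2 : ℝ) • b) = a + b := by
      rw [smul_add, smul_smul, smul_smul]; norm_num
    rwa [this] at h2
  -- the gradient of f is the pullback of the gradient of g
  have hgrad : ∀ p w, ⟪f' p, w⟫ = ⟪g' (A p), A w⟫ := by
    intro p w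
    have h1 : HasFDerivAt f
        (InnerProductSpace.toDual ℝ (EuclideanSpace ℝ (Fin n)) (f' p)) p :=
      (hf' p).hasFDerivAt
    have h2 : HasFDerivAt g
        (InnerProductSpace.toDual ℝ (EuclideanSpace ℝ (Fin m)) (g' (A p)))
        (LinearMap.toContinuousLinearMap A p) :=
      (hgdiff (A p)).hasFDerivAt
    have h3 : HasFDerivAt (fun z => (LinearMap.toContinuousLinearMap A) z)
        (LinearMap.toContinuousLinearMap A) p :=
      (LinearMap.toContinuousLinearMap A).hasFDerivAt
    have h4 := h2.comp p h3
    have hfe : f = g ∘ ⇑(LinearMap.toContinuousLinearMap A) :=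
      funext fun z => hf z
    rw [← hfe] at h4
    have h5 := h1.unique h4
    have h6 := congrArg (fun (L : EuclideanSpace ℝ (Fin n) →L[ℝ] ℝ) => L w) h5
    simpa [InnerProductSpace.toDual_apply_apply] using h6
  intro x hx y hy
  -- abbreviations
  set S : Set ℝ := {r : ℝ | ∃ v ∈ A '' X, nm v ≤ 1 ∧
      r = sInf {s | ∃ x ∈ X, A x = v ∧ s = nn x}} with hS
  set K : ℝ := sSup S with hKdef
  -- membership in Z forces A z = A y
  have hZ : ∀ z, z ∈ X → f z = f y → ⟪f' z - f' y, z - y⟫ = 0 → A z = A y := by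
    intro z hzX hfz hinner
    have e1 := hgstrong (A y) (A z)
    have e2 := hgstrong (A z) (A y)
    have hsym : nm (A y - A z) = nm (A z - A y) := by
      have := hnm_smul (-1) (A z - A y)
      simpa [neg_sub] using this
    rw [hsym] at e2
    have hin : ⟪f' z - f' y, z - y⟫ = ⟪g' (A z) - g' (A y), A z - A y⟫ := by
      rw [inner_sub_left, hgrad z (z - y), hgrad y (z - y), inner_sub_left,
        map_sub]
    have hiner2 : ⟪g' (A z) - g' (A y), A z - A y⟫ = 0 := by rw [← hin]; exact hinner
    have hexp : ⟪g' (A z) - g' (A y), A z - A y⟫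
        = ⟪g' (A z), A z - A y⟫ - ⟪g' (A y), A z - A y⟫ := inner_sub_left _ _ _
    have hswap : ⟪g' (A z), A y - A z⟫ = -⟪g' (A z), A z - A y⟫ := by
      rw [← inner_neg_right, neg_sub]
    have ht : 0 ≤ nm (A z - A y) := hnm_nonneg _
    have hle : μg / 2 * nm (A z - A y) ^ 2 ≤ 0 := by linarith
    have hnmzero : nm (A z - A y) = 0 := by
      by_contra hne
      have htpos : 0 < nm (A z - A y) := lt_of_le_of_ne ht (Ne.symm hne)
      have : 0 < μg / 2 * nm (A z - A y) ^ 2 := by positivity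
      linarith
    have := (hnm0 (A z - A y)).mp hnmzero
    exact sub_eq_zero.mp this
  -- conversely, A z = A y and z ∈ X give membership in Z
  have hP : ∀ z, z ∈ X → A z = A y →
      (z ∈ X ∧ f z = f y ∧ ⟪f' z - f' y, z - y⟫ = 0) := by
    intro z hzX hAz
    refine ⟨hzX, by rw [hf, hf, hAz], ?_⟩
    have hin : ⟪f' z - f' y, z - y⟫ = ⟪g' (A z) - g' (A y), A z - A y⟫ := by
      rw [inner_sub_left, hgrad z (z - y), hgrad y (z - y), inner_sub_left,
        map_sub]
    rw [hin, hAz, sub_self, sub_self, inner_zero_left]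
  have hPy : y ∈ X ∧ f y = f y ∧ ⟪f' y - f' y, y - y⟫ = 0 := hP y hy rfl
  -- the value of the Bregman distance on Z
  set Δ : ℝ := g (A y) - g (A x) - ⟪g' (A x), A y - A x⟫ with hΔdef
  have hval : ∀ z, (z ∈ X ∧ f z = f y ∧ ⟪f' z - f' y, z - y⟫ = 0) →
      f z - f x - ⟪f' x, z - x⟫ = Δ := by
    rintro z ⟨hzX, hfz, hinner⟩
    have hAz : A z = A y := hZ z hzX hfz hinner
    rw [hf z, hf x, hgrad x (z - x), map_sub, hAz]
  have hΔlb : (μg / 2) * (nm (A y - A x)) ^ 2 ≤ Δ := hgstrong (A x) (A y)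
  have hΔnonneg : 0 ≤ Δ := le_trans (by positivity) hΔlb
  -- the right-hand side
  have hRset : {r | ∃ z, (z ∈ X ∧ f z = f y ∧ ⟪f' z - f' y, z - y⟫ = 0) ∧
      r = f z - f x - ⟪f' x, z - x⟫} = {Δ} := by
    ext r
    simp only [mem_setOf_eq, mem_singleton_iff]
    constructor
    · rintro ⟨z, hz, rfl⟩; exact hval z hz
    · rintro rfl; exact ⟨y, hPy, (hval y hPy).symm⟩
  rw [hRset, csInf_singleton]
  -- the left-hand side set
  set Lset : Set ℝ := {r | ∃ z, (z ∈ X ∧ f z = f y ∧ ⟪f' z - f' y, z - y⟫ = 0) ∧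
      r = D z x} with hLdef
  have hLne : Lset.Nonempty := ⟨D y x, y, hPy, rfl⟩
  have hLbdd : BddBelow Lset := by
    refine ⟨0, ?_⟩
    rintro r ⟨z, hz, rfl⟩
    exact hDnn x hx z hz.1
  -- K is nonnegative
  have hKnonneg : 0 ≤ K := by
    by_cases hbdd : BddAbove S
    · have h0W : (0 : EuclideanSpace ℝ (Fin m)) ∈ A '' X := by
        rw [hW]; exact W.zero_mem
      have hr0 : sInf {s | ∃ x ∈ X, A x = (0 : EuclideanSpace ℝ (Fin m)) ∧ s = nn x} ∈ S := by
        refine ⟨0, h0W, by rw [(hnm0 0).mpr rfl]; norm_num, rfl⟩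
      have h1 : 0 ≤ sInf {s | ∃ x ∈ X, A x = (0 : EuclideanSpace ℝ (Fin m)) ∧ s = nn x} := by
        apply Real.sInf_nonneg
        rintro s ⟨x', _, _, rfl⟩
        exact hnn_nonneg x'
      exact le_trans h1 (le_csSup hbdd hr0)
    · rw [hKdef, csSup_of_not_bddAbove hbdd, Real.sSup_empty]
  rcases eq_or_lt_of_le hKnonneg with hK0 | hKpos
  · -- K = 0 : the coefficient vanishes
    rw [← hK0]
    simp [hΔnonneg]
  -- main case: K > 0; S must then be bounded above
  have hbdd : BddAbove S := by
    by_contra hbdd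
    rw [hKdef, csSup_of_not_bddAbove hbdd, Real.sSup_empty] at hKpos
    exact lt_irrefl _ hKpos
  have hcoeff : 0 < μg / K ^ 2 := by positivity
  by_cases hAxy : A x = A y
  · -- A x = A y : x itself is in Z and D x x = 0
    have hPx := hP x hx hAxy
    have hmem : D x x ∈ Lset := ⟨x, hPx, rfl⟩
    have h1 : sInf Lset ≤ 0 := by
      have := csInf_le hLbdd hmem
      rwa [hD0 x hx] at this
    calc (μg / K ^ 2) * sInf Lset ≤ 0 :=
          mul_nonpos_of_nonneg_of_nonpos (le_of_lt hcoeff) h1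
      _ ≤ Δ := hΔnonneg
  · -- A x ≠ A y
    set v : EuclideanSpace ℝ (Fin m) := A y - A x with hvdef
    have hvne : v ≠ 0 := fun h => hAxy (sub_eq_zero.mp h).symm
    set c : ℝ := nm v with hcdef
    have hcpos : 0 < c := by
      rcases lt_or_eq_of_le (hnm_nonneg v) with h | h
      · exact h
      · exact absurd ((hnm0 v).mp h.symm) hvne
    -- v lies in the subspace A(X)
    have hvW : v ∈ A '' X := by
      have hAy : A y ∈ A '' X := mem_image_of_mem _ hy
      have hAx : A x ∈ A '' X := mem_image_of_mem _ hx
      rw [hW] at hAy hAx ⊢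
      exact W.sub_mem hAy hAx
    have hwW : c⁻¹ • v ∈ A '' X := by
      rw [hW] at hvW ⊢
      exact W.smul_mem _ hvW
    set w : EuclideanSpace ℝ (Fin m) := c⁻¹ • v with hwdef
    have hnmw : nm w = 1 := by
      rw [hwdef, hnm_smul, abs_of_pos (inv_pos.mpr hcpos), ← hcdef,
        inv_mul_cancel₀ (ne_of_gt hcpos)]
    set Tw : Set ℝ := {s | ∃ x ∈ X, A x = w ∧ s = nn x} with hTwdef
    have hTwne : Tw.Nonempty := by
      obtain ⟨x', hx'X, hAx'⟩ := hwW
      exact ⟨nn x', x', hx'X, hAx', rfl⟩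
    have hTwS : sInf Tw ∈ S := ⟨w, hwW, le_of_eq hnmw, rfl⟩
    have hTwK : sInf Tw ≤ K := le_csSup hbdd hTwS
    -- key estimate on the infimum of the left set
    have hkey : sInf Lset ≤ (1 / 2) * (c * K) ^ 2 := by
      apply le_of_forall_pos_le_add
      intro ε hε
      set t : ℝ := min 1 (ε / (c * K + 1)) with htdef
      have hcK : 0 ≤ c * K := mul_nonneg (le_of_lt hcpos) hKnonneg
      have htpos : 0 < t := lt_min one_pos (div_pos hε (by linarith))
      have ht1 : t ≤ 1 := min_le_left _ _
      have ht2 : t ≤ ε / (c * K + 1) := min_le_right _ _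
      have ht3 : t * (c * K + 1) ≤ ε := by
        rw [← le_div_iff₀ (by linarith)]; exact ht2
      obtain ⟨s, hsTw, hs⟩ := Real.lt_sInf_add_pos hTwne (div_pos htpos hcpos)
      obtain ⟨x', hx'X, hAx', rfl⟩ := hsTw
      have hnnx' : nn x' < K + t / c := by
        calc nn x' < sInf Tw + t / c := hs
          _ ≤ K + t / c := by linarith
      -- construct the point z' = x + c • x'
      have hcx' : c • x' ∈ X := hXcone c hcpos x' hx'X
      have hz'X : x + c • x' ∈ X := hXadd x hx _ hcx'
      have hAz' : A (x + c • x') = A y := by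
        rw [map_add, map_smul, hAx', hwdef, smul_smul,
          mul_inv_cancel₀ (ne_of_gt hcpos), one_smul, hvdef]
        abel
      have hPz' := hP _ hz'X hAz'
      have hmem : D (x + c • x') x ∈ Lset := ⟨_, hPz', rfl⟩
      have hD1 : D (x + c • x') x ≤ (1 / 2) * (nn (c • x')) ^ 2 := by
        have := hDupper x hx _ hz'X
        simpa using this
      have hnncx' : nn (c • x') < c * K + t := by
        rw [hnn_smul, abs_of_pos hcpos]
        calc c * nn x' < c * (K + t / c) :=
              (mul_lt_mul_iff_right₀ hcpos).mpr hnnx'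
          _ = c * K + t := by field_simp
      have hnncx'nonneg : 0 ≤ nn (c • x') := hnn_nonneg _
      have hD2 : D (x + c • x') x ≤ (1 / 2) * (c * K) ^ 2 + ε := by
        nlinarith [hD1, hnncx', hnncx'nonneg, ht1, ht3, htpos]
      exact le_trans (csInf_le hLbdd hmem) hD2
    -- conclude
    have hstep : (μg / K ^ 2) * sInf Lset ≤ (μg / K ^ 2) * ((1 / 2) * (c * K) ^ 2) :=
      mul_le_mul_of_nonneg_left hkey (le_of_lt hcoeff)
    have heq : (μg / K ^ 2) * ((1 / 2) * (c * K) ^ 2) = (μg / 2) * c ^ 2 := by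
      field_simp
    have hfin : (μg / 2) * c ^ 2 ≤ Δ := hΔlb
    calc (μg / K ^ 2) * sInf Lset ≤ (μg / K ^ 2) * ((1 / 2) * (c * K) ^ 2) := hstep
      _ = (μg / 2) * c ^ 2 := heq
      _ ≤ Δ := hfin
end
end

section
/- Let ℝ^n and ℝ^m be endowed with norms, let D : X × X → ℝ be a distance-like function satisfying D(y,x) ≤ (1/2)‖y − x‖² for all x,y ∈ X, let A ∈ ℝ^{m×n}, c ∈ ℝ^n, let g : ℝ^m → ℝ be convex, differentiable and μ_g-strongly convex for the norm on ℝ^m, let f(x) := g(Ax) + ⟨c,x⟩, and let X ⊆ ℝ^n be a polyhedron such that A(X) contains more than one point, X* := argmin_{x∈X} f(x) is nonempty with minimum value f*, and for each x ∈ X the point x̄ := argmin_{y∈X*} D(y,x) exists and is unique. Let v := 2∇f(y₀) for some (equivalently, every) y₀ ∈ X*. If ⟨v, x − y⟩ = 0 for all x ∈ X and y ∈ X*, then f(x) − f* ≥ μ·D(x̄,x) for all x ∈ X, where μ := inf_{C ∈ T(A|X,X*)} μ_g/‖(A|C)^{-1}‖². -/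
noncomputable section
open scoped RealInnerProductSpace
open Set

/-- A polyhedron: an intersection of finitely many closed halfspaces. -/
def IsPolyhedron {n : ℕ} (X : Set (EuclideanSpace ℝ (Fin n))) : Prop :=
  ∃ (k : ℕ) (c : Fin k → EuclideanSpace ℝ (Fin n)) (b : Fin k → ℝ),
    X = {x | ∀ i, ⟪c i, x⟫ ≤ b i}

/-- T_X(x; A, S): the cone of directions d such that x + t·d ∈ X and A(x + t·d) ∈ conv(A(S))
for some t > 0. -/
def tangentConeRelAt {m n : ℕ} (X : Set (EuclideanSpace ℝ (Fin n)))
    (A : EuclideanSpace ℝ (Fin n) →ₗ[ℝ] EuclideanSpace ℝ (Fin m))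
    (S : Set (EuclideanSpace ℝ (Fin n))) (x : EuclideanSpace ℝ (Fin n)) :
    Set (EuclideanSpace ℝ (Fin n)) :=
  {d | ∃ t : ℝ, 0 < t ∧ x + t • d ∈ X ∧ A (x + t • d) ∈ convexHull ℝ (A '' S)}

/-- T(A|X,S) := {T_X(x; A, S) : x ∈ X}. -/
def TAXS {m n : ℕ} (A : EuclideanSpace ℝ (Fin n) →ₗ[ℝ] EuclideanSpace ℝ (Fin m))
    (X S : Set (EuclideanSpace ℝ (Fin n))) : Set (Set (EuclideanSpace ℝ (Fin n))) :=
  {C | ∃ x ∈ X, C = tangentConeRelAt X A S x}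

lemma aux_line_deriv {k : ℕ} (g : EuclideanSpace ℝ (Fin k) → ℝ)
    (G u d : EuclideanSpace ℝ (Fin k)) (hg : HasGradientAt g G u) :
    HasDerivAt (fun t : ℝ => g (u + t • d)) ⟪G, d⟫ 0 := by
  have hφ : HasDerivAt (fun t : ℝ => u + t • d) d (0:ℝ) := by
    simpa using ((hasDerivAt_id (0:ℝ)).smul_const d).const_add u
  have h2 := hg.hasFDerivAt.comp_hasDerivAt_of_eq 0 hφ (by simp)
  simp [Function.comp, InnerProductSpace.toDual_apply_apply] at h2
  exact h2

lemma aux_deriv_nonneg (ψ : ℝ → ℝ) (L : ℝ) (h : HasDerivAt ψ L 0)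
    (hmin : ∀ t ∈ Set.Ioc (0:ℝ) 1, ψ 0 ≤ ψ t) : 0 ≤ L := by
  have ht := hasDerivAt_iff_tendsto_slope.1 h
  have ht' : Filter.Tendsto (slope ψ 0) (nhdsWithin 0 (Set.Ioi (0:ℝ))) (nhds L) :=
    ht.mono_left (nhdsWithin_mono 0 (fun x hx => ne_of_gt hx))
  refine ge_of_tendsto ht' ?_
  filter_upwards [Ioc_mem_nhdsGT_of_mem ⟨le_refl (0:ℝ), zero_lt_one⟩] with t ht
  rw [slope_def_field]
  have h1 := hmin t ht
  have ht0 : (0:ℝ) < t := ht.1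
  apply div_nonneg <;> simp <;> linarith

set_option maxHeartbeats 1000000 in
/-- Theorem thm.main.growth, Case 1: if ⟨v, x − y⟩ = 0 for all x ∈ X, y ∈ X*,
then f has relative functional growth with constant inf over C ∈ T(A|X,X*) of μ_g/‖(A|C)⁻¹‖². -/
theorem relative_functional_growth_case_orthogonal {m n : ℕ}
    (nn : EuclideanSpace ℝ (Fin n) → ℝ)
    (hnn0 : ∀ x, nn x = 0 ↔ x = 0)
    (hnn_add : ∀ x y, nn (x + y) ≤ nn x + nn y)
    (hnn_smul : ∀ (c : ℝ) (x : EuclideanSpace ℝ (Fin n)), nn (c • x) = |c| * nn x)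
    (nm : EuclideanSpace ℝ (Fin m) → ℝ)
    (hnm0 : ∀ u, nm u = 0 ↔ u = 0)
    (hnm_add : ∀ u v, nm (u + v) ≤ nm u + nm v)
    (hnm_smul : ∀ (c : ℝ) (u : EuclideanSpace ℝ (Fin m)), nm (c • u) = |c| * nm u)
    (A : EuclideanSpace ℝ (Fin n) →ₗ[ℝ] EuclideanSpace ℝ (Fin m))
    (c : EuclideanSpace ℝ (Fin n))
    (g : EuclideanSpace ℝ (Fin m) → ℝ)
    (g' : EuclideanSpace ℝ (Fin m) → EuclideanSpace ℝ (Fin m))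
    (hgconv : ConvexOn ℝ Set.univ g)
    (hgdiff : ∀ u, HasGradientAt g (g' u) u)
    (μg : ℝ) (hμg : 0 < μg)
    (hgstrong : ∀ u v, (μg / 2) * (nm (v - u)) ^ 2 ≤ g v - g u - ⟪g' u, v - u⟫)
    (f : EuclideanSpace ℝ (Fin n) → ℝ)
    (hf : ∀ x, f x = g (A x) + ⟪c, x⟫)
    (f' : EuclideanSpace ℝ (Fin n) → EuclideanSpace ℝ (Fin n))
    (hf' : ∀ x, HasGradientAt f (f' x) x)
    (X : Set (EuclideanSpace ℝ (Fin n)))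
    (hXpoly : IsPolyhedron X)
    (hAX2 : (A '' X).Nontrivial)
    (Xstar : Set (EuclideanSpace ℝ (Fin n)))
    (hXstar : Xstar = {x | x ∈ X ∧ ∀ y ∈ X, f x ≤ f y})
    (hXstar_ne : Xstar.Nonempty)
    (fstar : ℝ) (hfstar : ∀ y ∈ Xstar, f y = fstar)
    (D : EuclideanSpace ℝ (Fin n) → EuclideanSpace ℝ (Fin n) → ℝ)
    (hD0 : ∀ x ∈ X, D x x = 0)
    (hDnn : ∀ x ∈ X, ∀ y ∈ X, 0 ≤ D y x)
    (hDupper : ∀ x ∈ X, ∀ y ∈ X, D y x ≤ (1 / 2) * (nn (y - x)) ^ 2)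
    (xbar : EuclideanSpace ℝ (Fin n) → EuclideanSpace ℝ (Fin n))
    (hbar : ∀ x ∈ X, xbar x ∈ Xstar ∧ ∀ y ∈ Xstar, D (xbar x) x ≤ D y x)
    (hbar_unique : ∀ x ∈ X, ∀ y ∈ Xstar, (∀ z ∈ Xstar, D y x ≤ D z x) → y = xbar x)
    (y₀ : EuclideanSpace ℝ (Fin n)) (hy₀ : y₀ ∈ Xstar)
    (v : EuclideanSpace ℝ (Fin n)) (hv : v = (2 : ℝ) • f' y₀)
    (horth : ∀ x ∈ X, ∀ y ∈ Xstar, ⟪v, x - y⟫ = 0)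
    (μ : ℝ)
    -- cones on which `A` vanishes have `‖(A|C)⁻¹‖ = 0`; the paper's `μ_g / 0 = +∞` does not touch the infimum
    (hμ : μ = sInf {r : ℝ | ∃ C ∈ TAXS A X Xstar, (∃ d ∈ C, A d ≠ 0) ∧
        r = μg / (sSup {s : ℝ | ∃ v' ∈ A '' C, nm v' ≤ 1 ∧
            s = sInf {t | ∃ x ∈ C, A x = v' ∧ t = nn x}}) ^ 2}) :
    ∀ x ∈ X, μ * D (xbar x) x ≤ f x - fstar := by
  -- nonnegativity of the norms
  have hnn_nonneg : ∀ x, 0 ≤ nn x := by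
    intro x
    have h0 : nn (0 : EuclideanSpace ℝ (Fin n)) = 0 := (hnn0 0).mpr rfl
    have h1 : nn (-x) = nn x := by simpa using hnn_smul (-1) x
    have h2 := hnn_add x (-x)
    simp only [add_neg_cancel, h0, h1] at h2
    linarith
  have hnm_nonneg : ∀ u, 0 ≤ nm u := by
    intro u
    have h0 : nm (0 : EuclideanSpace ℝ (Fin m)) = 0 := (hnm0 0).mpr rfl
    have h1 : nm (-u) = nm u := by simpa using hnm_smul (-1) u
    have h2 := hnm_add u (-u)
    simp only [add_neg_cancel, h0, h1] at h2
    linarith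
  -- X is convex
  have hXconv : Convex ℝ X := by
    obtain ⟨k, cc, b, hXeq⟩ := hXpoly
    rw [hXeq]
    intro p hp q hq a a' ha ha' hab
    intro i
    calc ⟪cc i, a • p + a' • q⟫ = a * ⟪cc i, p⟫ + a' * ⟪cc i, q⟫ := by
          rw [inner_add_right, real_inner_smul_right, real_inner_smul_right]
      _ ≤ a * b i + a' * b i :=
          add_le_add (mul_le_mul_of_nonneg_left (hp i) ha)
            (mul_le_mul_of_nonneg_left (hq i) ha')
      _ = b i := by rw [← add_mul, hab, one_mul]
  have hXsX : ∀ y ∈ Xstar, y ∈ X := fun y hy => (hXstar ▸ hy).1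
  have hy₀' : y₀ ∈ X ∧ ∀ z ∈ X, f y₀ ≤ f z := by
    have h := hy₀; rw [hXstar] at h; exact h
  have hfy₀ : f y₀ = fstar := hfstar y₀ hy₀
  have hf_lb : ∀ z ∈ X, fstar ≤ f z := fun z hz => hfy₀ ▸ hy₀'.2 z hz
  -- A is constant on Xstar
  have hAconst : ∀ y ∈ Xstar, A y = A y₀ := by
    intro y hy
    have hyX : y ∈ X := hXsX y hy
    have hfy : f y = fstar := hfstar y hy
    set md := (1/2 : ℝ) • y + (1/2 : ℝ) • y₀ with hmd
    have hmdX : md ∈ X := hXconv hyX (hXsX y₀ hy₀) (by norm_num) (by norm_num) (by norm_num)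
    have hAmd : A md = (1/2 : ℝ) • A y + (1/2 : ℝ) • A y₀ := by
      rw [hmd, map_add, map_smul, map_smul]
    have hcmd : ⟪c, md⟫ = (1/2) * ⟪c, y⟫ + (1/2) * ⟪c, y₀⟫ := by
      rw [hmd, inner_add_right, real_inner_smul_right, real_inner_smul_right]
    have hconv := hgconv.2 (Set.mem_univ (A y)) (Set.mem_univ (A y₀))
      (by norm_num : (0:ℝ) ≤ 1/2) (by norm_num : (0:ℝ) ≤ 1/2) (by norm_num)
    rw [← hAmd] at hconv
    simp only [smul_eq_mul] at hconv
    have hfmd_le : f md ≤ fstar := by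
      have e1 := hf y; have e2 := hf y₀; have e3 := hf md
      linarith
    have hfmd : f md = fstar := le_antisymm hfmd_le (hf_lb md hmdX)
    have h1 := hgstrong (A md) (A y)
    have h2 := hgstrong (A md) (A y₀)
    have hsum0 : (A y - A md) + (A y₀ - A md) = 0 := by rw [hAmd]; module
    have hinner : ⟪g' (A md), A y - A md⟫ + ⟪g' (A md), A y₀ - A md⟫ = 0 := by
      rw [← inner_add_right, hsum0, inner_zero_right]
    have hgsum : g (A y) + g (A y₀) - 2 * g (A md) = 0 := by
      have e1 := hf y; have e2 := hf y₀; have e3 := hf md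
      linarith
    have hpos : (0:ℝ) < μg / 2 := by linarith
    have h9 : μg / 2 * (nm (A y - A md)) ^ 2 ≤ μg / 2 * 0 := by
      have hb := mul_nonneg hpos.le (sq_nonneg (nm (A y₀ - A md)))
      linarith
    have h10 : μg / 2 * (nm (A y₀ - A md)) ^ 2 ≤ μg / 2 * 0 := by
      have hb := mul_nonneg hpos.le (sq_nonneg (nm (A y - A md)))
      linarith
    have hsq1 : (nm (A y - A md)) ^ 2 = 0 :=
      le_antisymm (by linarith [(mul_le_mul_iff_right₀ hpos).mp h9]) (sq_nonneg _)
    have hsq2 : (nm (A y₀ - A md)) ^ 2 = 0 :=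
      le_antisymm (by linarith [(mul_le_mul_iff_right₀ hpos).mp h10]) (sq_nonneg _)
    have hz1 : A y - A md = 0 :=
      (hnm0 _).mp (sq_eq_zero_iff.mp hsq1)
    have hz2 : A y₀ - A md = 0 :=
      (hnm0 _).mp (sq_eq_zero_iff.mp hsq2)
    have := sub_eq_zero.mp hz1
    have := sub_eq_zero.mp hz2
    rw [sub_eq_zero.mp hz1, ← sub_eq_zero.mp hz2]
  -- upgrade lemma: points of X mapped to A y₀ are optimal
  have hupgrade : ∀ w ∈ X, A w = A y₀ → f w = fstar ∧ w ∈ Xstar := by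
    intro w hw hAw
    set h := w - y₀ with hh
    have hAh : A h = 0 := by rw [hh, map_sub, hAw, sub_self]
    have hd1 : HasDerivAt (fun t : ℝ => f (y₀ + t • h)) ⟪f' y₀, h⟫ 0 :=
      aux_line_deriv f (f' y₀) y₀ h (hf' y₀)
    have hd2 : HasDerivAt (fun t : ℝ => f (y₀ + t • h)) ⟪c, h⟫ 0 := by
      have heq : (fun t : ℝ => f (y₀ + t • h))
          = fun t : ℝ => (g (A y₀) + ⟪c, y₀⟫) + t * ⟪c, h⟫ := by
        funext t
        rw [hf, map_add, map_smul, hAh, smul_zero, add_zero, inner_add_right,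
          real_inner_smul_right]
        ring
      rw [heq]
      simpa using ((hasDerivAt_id (0:ℝ)).mul_const ⟪c, h⟫).const_add (g (A y₀) + ⟪c, y₀⟫)
    have heq2 : ⟪f' y₀, h⟫ = ⟪c, h⟫ := hd1.unique hd2
    have h0 : ⟪c, h⟫ = 0 := by
      have hv0 := horth w hw y₀ hy₀
      rw [hv, real_inner_smul_left, ← hh] at hv0
      linarith [heq2]
    have hfw : f w = fstar := by
      have hcw : ⟪c, w⟫ = ⟪c, y₀⟫ + ⟪c, h⟫ := by rw [hh, inner_sub_right]; ring
      rw [hf w, hAw, hcw, h0, add_zero, ← hf y₀, hfy₀]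
    exact ⟨hfw, by rw [hXstar]; exact ⟨hw, fun z hz => by rw [hfw]; exact hf_lb z hz⟩⟩
  -- convex hull of image of Xstar
  have hhull : convexHull ℝ (A '' Xstar) = {A y₀} := by
    have himg : A '' Xstar = {A y₀} := by
      apply Set.eq_singleton_iff_nonempty_unique_mem.mpr
      exact ⟨hXstar_ne.image A, by rintro u ⟨y, hy, rfl⟩; exact hAconst y hy⟩
    rw [himg, convexHull_singleton]
  -- Step A: strong-convexity lower bound
  have hstepA : ∀ x ∈ X, (μg / 2) * (nm (A x - A y₀)) ^ 2 ≤ f x - fstar := by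
    intro x hx
    have hzstar : xbar x ∈ Xstar := (hbar x hx).1
    set z := xbar x with hz
    have hzX : z ∈ X := hXsX z hzstar
    have hAz : A z = A y₀ := hAconst z hzstar
    have hfz : f z = fstar := hfstar z hzstar
    set d := x - z with hd
    have hgd : HasDerivAt (fun t : ℝ => g (A z + t • A d)) ⟪g' (A z), A d⟫ 0 :=
      aux_line_deriv g (g' (A z)) (A z) (A d) (hgdiff (A z))
    have hlin : HasDerivAt (fun t : ℝ => ⟪c, z⟫ + t * ⟪c, d⟫) ⟪c, d⟫ 0 := by
      simpa using ((hasDerivAt_id (0:ℝ)).mul_const ⟪c, d⟫).const_add ⟪c, z⟫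
    have hψeq : (fun t : ℝ => f (z + t • d))
        = fun t : ℝ => g (A z + t • A d) + (⟪c, z⟫ + t * ⟪c, d⟫) := by
      funext t
      rw [hf, map_add, map_smul, inner_add_right, real_inner_smul_right]; try ring
    have hψ : HasDerivAt (fun t : ℝ => f (z + t • d)) (⟪g' (A z), A d⟫ + ⟪c, d⟫) 0 := by
      rw [hψeq]; exact hgd.add hlin
    have hnonneg : 0 ≤ ⟪g' (A z), A d⟫ + ⟪c, d⟫ := by
      apply aux_deriv_nonneg _ _ hψ
      intro t ht
      have hmem : z + t • d ∈ X := by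
        have hrep : z + t • d = (1 - t) • z + t • x := by rw [hd]; module
        rw [hrep]
        exact hXconv hzX hx (by linarith [ht.2]) (le_of_lt ht.1) (by ring)
      simp only [zero_smul, add_zero]
      calc f z = fstar := hfz
        _ ≤ f (z + t • d) := hf_lb _ hmem
    have hsc := hgstrong (A z) (A x)
    have hAd : A d = A x - A z := by rw [hd, map_sub]
    have hfx : f x - fstar = g (A x) - g (A z) + ⟪c, d⟫ := by
      rw [hf x, ← hfz, hf z, hd, inner_sub_right]; ring
    rw [hAd] at hnonneg
    rw [← hAz]
    linarith
  -- μ is nonnegative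
  have hμ0 : 0 ≤ μ := by
    rw [hμ]
    apply Real.sInf_nonneg
    rintro r ⟨C, hC, -, rfl⟩
    exact div_nonneg hμg.le (sq_nonneg _)
  -- main argument
  intro x hx
  by_cases hcase : A x = A y₀
  · have hxstar := (hupgrade x hx hcase).2
    have hxeq : x = xbar x :=
      hbar_unique x hx x hxstar (fun z hz => by
        rw [hD0 x hx]; exact hDnn x hx z (hXsX z hz))
    rw [← hxeq, hD0 x hx, mul_zero]
    linarith [hf_lb x hx]
  · set w := A y₀ - A x with hwdef
    have hw0 : w ≠ 0 := sub_ne_zero.mpr (Ne.symm hcase)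
    set ρ := nm w with hρdef
    have hρ0 : 0 < ρ := lt_of_le_of_ne (hnm_nonneg w) (fun hc => hw0 ((hnm0 w).mp hc.symm))
    set C := tangentConeRelAt X A Xstar x with hC
    set v' := ρ⁻¹ • w with hv'
    have hxbar := hbar x hx
    have hxbX : xbar x ∈ X := hXsX _ hxbar.1
    have hAxb : A (xbar x) = A y₀ := hAconst _ hxbar.1
    set z₀ := ρ⁻¹ • (xbar x - x) with hz₀
    have hxz : x + ρ • z₀ = xbar x := by
      rw [hz₀, smul_smul, mul_inv_cancel₀ (ne_of_gt hρ0), one_smul]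
      abel
    have hz₀C : z₀ ∈ C := by
      refine ⟨ρ, hρ0, ?_, ?_⟩
      · rw [hxz]; exact hxbX
      · rw [hxz, hhull, hAxb]; exact rfl
    have hAz₀ : A z₀ = v' := by
      rw [hz₀, map_smul, map_sub, hAxb, hv', hwdef]
    have hkey : ∀ z ∈ C, A z = v' → x + ρ • z ∈ Xstar := by
      intro z hzC hAzv
      obtain ⟨t, ht, htX, htconv⟩ := hzC
      rw [hhull, Set.mem_singleton_iff] at htconv
      have hAxt : A x + (t * ρ⁻¹) • w = A y₀ := by
        rw [← smul_smul, ← hv', ← hAzv, ← map_smul, ← map_add] at *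
        exact htconv
      have h1 : (t * ρ⁻¹) • w = w := by
        rw [hwdef]
        rw [eq_sub_iff_add_eq, add_comm]
        exact hAxt
      have ht2 : t = ρ := by
        have h2 : (t * ρ⁻¹ - 1) • w = 0 := by rw [sub_smul, one_smul, h1, sub_self]
        rcases smul_eq_zero.mp h2 with h3 | h3
        · have h4 : t * ρ⁻¹ = 1 := by linarith
          field_simp at h4
          exact h4
        · exact absurd h3 hw0
      rw [ht2] at htX htconv
      exact (hupgrade (x + ρ • z) htX htconv).2
    set dbar := D (xbar x) x with hdbar
    have hdbar0 : 0 ≤ dbar := hDnn x hx _ hxbX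
    set β := Real.sqrt (2 * dbar) / ρ with hβ
    have hbound : ∀ z ∈ C, A z = v' → β ≤ nn z := by
      intro z hzC hAzv
      have hyst := hkey z hzC hAzv
      have hyX : x + ρ • z ∈ X := hXsX _ hyst
      have h1 : dbar ≤ (1 / 2) * (nn (x + ρ • z - x)) ^ 2 :=
        le_trans (hxbar.2 _ hyst) (hDupper x hx _ hyX)
      have h2 : nn (x + ρ • z - x) = ρ * nn z := by
        rw [add_sub_cancel_left, hnn_smul, abs_of_pos hρ0]
      rw [h2] at h1
      have h3 : Real.sqrt (2 * dbar) ≤ ρ * nn z := by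
        rw [show ρ * nn z = Real.sqrt ((ρ * nn z) ^ 2) from
          (Real.sqrt_sq (mul_nonneg hρ0.le (hnn_nonneg z))).symm]
        apply Real.sqrt_le_sqrt
        linarith
      rw [hβ, div_le_iff₀ hρ0]
      linarith [h3]
    set I := {t | ∃ z ∈ C, A z = v' ∧ t = nn z} with hI
    have hIne : I.Nonempty := ⟨nn z₀, z₀, hz₀C, hAz₀, rfl⟩
    have hβ0 : 0 ≤ β := div_nonneg (Real.sqrt_nonneg _) hρ0.le
    have hsinf : β ≤ sInf I :=
      le_csInf hIne (by rintro t ⟨z, hzC, hAzv, rfl⟩; exact hbound z hzC hAzv)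
    set S := {s : ℝ | ∃ v'' ∈ A '' C, nm v'' ≤ 1 ∧
        s = sInf {t | ∃ x ∈ C, A x = v'' ∧ t = nn x}} with hS
    have hmem : sInf I ∈ S := by
      refine ⟨v', ⟨z₀, hz₀C, hAz₀⟩, ?_, rfl⟩
      rw [hv', hnm_smul, abs_of_pos (inv_pos.mpr hρ0), ← hρdef,
        inv_mul_cancel₀ (ne_of_gt hρ0)]
    have hμle : μ ≤ μg / (sSup S) ^ 2 := by
      rw [hμ]
      apply csInf_le
      · exact ⟨0, by rintro r ⟨C', hC', -, rfl⟩; exact div_nonneg hμg.le (sq_nonneg _)⟩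
      · exact ⟨C, ⟨x, hx, hC⟩, ⟨z₀, hz₀C, by rw [hAz₀, hv']; exact smul_ne_zero (inv_ne_zero (ne_of_gt hρ0)) hw0⟩, rfl⟩
    set sC := sSup S with hsC
    by_cases hbdd : BddAbove S
    · have hsCge : sInf I ≤ sC := le_csSup hbdd hmem
      have hβsC : β ≤ sC := le_trans hsinf hsCge
      by_cases hd0 : dbar = 0
      · rw [hd0, mul_zero]; linarith [hf_lb x hx]
      · have hdpos : 0 < dbar := lt_of_le_of_ne hdbar0 (Ne.symm hd0)
        have hβpos : 0 < β := by
          rw [hβ]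
          exact div_pos (Real.sqrt_pos.mpr (by linarith)) hρ0
        have hsCpos : 0 < sC := lt_of_lt_of_le hβpos hβsC
        have hsq : Real.sqrt (2 * dbar) ≤ sC * ρ := by
          rw [hβ, div_le_iff₀ hρ0] at hβsC
          linarith
        have h2d : 2 * dbar ≤ (sC * ρ) ^ 2 := by
          calc 2 * dbar = (Real.sqrt (2 * dbar)) ^ 2 := (Real.sq_sqrt (by linarith)).symm
            _ ≤ (sC * ρ) ^ 2 := by
                apply pow_le_pow_left₀ (Real.sqrt_nonneg _) hsq
        have hfinal : μ * dbar ≤ (μg / 2) * ρ ^ 2 := by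
          calc μ * dbar ≤ (μg / sC ^ 2) * ((sC * ρ) ^ 2 / 2) :=
                mul_le_mul hμle (by linarith) hdbar0 (div_nonneg hμg.le (sq_nonneg _))
            _ = (μg / 2) * ρ ^ 2 := by
                rw [mul_pow]
                field_simp [ne_of_gt hsCpos]
        have hA := hstepA x hx
        have hnmsym : nm (A x - A y₀) = ρ := by
          have hrw : A x - A y₀ = (-1 : ℝ) • w := by rw [hwdef]; module
          rw [hrw, hnm_smul]
          simp [hρdef]
        rw [hnmsym] at hA
        linarith
    · have hzero : sC = 0 := Real.sSup_of_not_bddAbove hbdd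
      have hμle0 : μ ≤ 0 := by
        rw [hzero] at hμle
        simpa using hμle
      have : μ = 0 := le_antisymm hμle0 hμ0
      rw [this, zero_mul]
      linarith [hf_lb x hx]
end
end

section
/- Let f : ℝ^n → ℝ be convex and differentiable, X ⊆ ℝ^n convex, and h : ℝ^n → ℝ convex and differentiable with Bregman distance D_h. Suppose f attains its minimum f* on X with nonempty solution set X*, and for each x ∈ X the point x̄ := argmin_{y∈X*} D_h(y,x) exists and is unique. Suppose L > 0 satisfies D_f(y,x) ≤ L·D_h(y,x) for all x,y ∈ X, and μ > 0 satisfies D_f(x̄,x) ≥ μ·D_h(x̄,x) for all x ∈ X. If x ∈ X and x₊ minimizes y ↦ f(x) + ⟨∇f(x), y − x⟩ + L·D_h(y,x) over y ∈ X, then f(x₊) − f* ≤ (L − μ)·D_h(x̄,x) − L·D_h(x̄,x₊). -/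
/-!
The mirror step `x₊` minimizes the model `y ↦ ⟪f' x, y - x⟫ + L D_h(y, x)` over the convex set `X`,
so the first-order optimality condition holds at `x₊` in the direction of `x̄`. By the three-point
identity of the Bregman distance this condition reads
`⟪f' x, x₊ - x⟫ + L D_h(x₊, x) ≤ ⟪f' x, x̄ - x⟫ + L D_h(x̄, x) - L D_h(x̄, x₊)`.
The relative smoothness bound on the left and the relative strong convexity bound at `x̄` on the
right turn this into the claim, since `f x̄ = f*`.
-/

noncomputable section
open scoped RealInnerProductSpace

section Bregman

variable {E : Type*} [NormedAddCommGroup E] [InnerProductSpace ℝ E]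

def bregmanDist (h : E → ℝ) (h' : E → E) (y x : E) : ℝ :=
  h y - h x - ⟪h' x, y - x⟫

theorem bregmanDist_three_point (h : E → ℝ) (h' : E → E) (x y z : E) :
    bregmanDist h h' y x - bregmanDist h h' y z - bregmanDist h h' z x = ⟪h' z - h' x, y - z⟫ := by
  have hsplit : y - x = (y - z) + (z - x) := by abel
  simp only [bregmanDist, hsplit, inner_add_right, inner_sub_left]
  ring

variable [CompleteSpace E]

theorem IsMinOn.inner_gradient_nonneg {s : Set E} {ψ : E → ℝ} {g p y : E}
    (hmin : IsMinOn ψ s p) (hs : Convex ℝ s) (hp : p ∈ s) (hy : y ∈ s)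
    (hψ : HasGradientAt ψ g p) : 0 ≤ ⟪g, y - p⟫ :=
  hmin.localize.hasFDerivWithinAt_nonneg hψ.hasFDerivAt.hasFDerivWithinAt
    (sub_mem_posTangentConeAt_of_segment_subset (hs.segment_subset hp hy))

theorem hasGradientAt_inner_add_bregmanDist {h : E → ℝ} {h' : E → E} {p : E}
    (hh : HasGradientAt h (h' p) p) (a x : E) (L : ℝ) :
    HasGradientAt (fun y ↦ ⟪a, y - x⟫ + L * bregmanDist h h' y x)
      (a + L • (h' p - h' x)) p := by
  rw [hasGradientAt_iff_hasFDerivAt]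
  have hlin : ∀ b : E, HasFDerivAt (fun y ↦ ⟪b, y - x⟫) (InnerProductSpace.toDual ℝ E b) p :=
    fun b ↦ by
      simpa [Function.comp_def] using
        (InnerProductSpace.toDual ℝ E b).hasFDerivAt.comp p ((hasFDerivAt_id p).sub_const x)
  have hD := ((hh.hasFDerivAt.sub_const (h x)).sub (hlin (h' x))).const_mul L
  refine ((hlin a).add hD).congr_fderiv ?_
  ext v
  simp

theorem IsMinOn.inner_add_bregmanDist_le {X : Set E} (hX : Convex ℝ X) {h : E → ℝ} {h' : E → E}
    {a x p y : E} {L : ℝ} (hmin : IsMinOn (fun y ↦ ⟪a, y - x⟫ + L * bregmanDist h h' y x) X p)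
    (hp : p ∈ X) (hy : y ∈ X) (hh : HasGradientAt h (h' p) p) :
    ⟪a, p - x⟫ + L * bregmanDist h h' p x
      ≤ ⟪a, y - x⟫ + L * bregmanDist h h' y x - L * bregmanDist h h' y p := by
  have hopt := hmin.inner_gradient_nonneg hX hp hy (hasGradientAt_inner_add_bregmanDist hh a x L)
  rw [inner_add_left, real_inner_smul_left, ← bregmanDist_three_point] at hopt
  have hsplit : ⟪a, y - x⟫ = ⟪a, y - p⟫ + ⟪a, p - x⟫ := by
    rw [← inner_add_right, sub_add_sub_cancel]
  linarith

end Bregman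

theorem mirror_descent_step_decrease_general {n : ℕ}
    (f : EuclideanSpace ℝ (Fin n) → ℝ)
    (f' : EuclideanSpace ℝ (Fin n) → EuclideanSpace ℝ (Fin n))
    (X : Set (EuclideanSpace ℝ (Fin n))) (hX : Convex ℝ X)
    (h : EuclideanSpace ℝ (Fin n) → ℝ)
    (h' : EuclideanSpace ℝ (Fin n) → EuclideanSpace ℝ (Fin n))
    (hhdiff : ∀ x, HasGradientAt h (h' x) x)
    (Dh : EuclideanSpace ℝ (Fin n) → EuclideanSpace ℝ (Fin n) → ℝ)
    (hDh : ∀ y x, Dh y x = h y - h x - ⟪h' x, y - x⟫)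
    (fstar : ℝ)
    (Xstar : Set (EuclideanSpace ℝ (Fin n)))
    (hXstar : Xstar = {x | x ∈ X ∧ f x = fstar})
    (xbar : EuclideanSpace ℝ (Fin n) → EuclideanSpace ℝ (Fin n))
    (hbar : ∀ x ∈ X, xbar x ∈ Xstar ∧ ∀ y ∈ Xstar, Dh (xbar x) x ≤ Dh y x)
    (L : ℝ)
    (hsmooth : ∀ x ∈ X, ∀ y ∈ X, f y - f x - ⟪f' x, y - x⟫ ≤ L * Dh y x)
    (μ : ℝ)
    (hquasi : ∀ x ∈ X, μ * Dh (xbar x) x ≤ f (xbar x) - f x - ⟪f' x, xbar x - x⟫)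
    (x : EuclideanSpace ℝ (Fin n)) (hx : x ∈ X)
    (xplus : EuclideanSpace ℝ (Fin n)) (hxplus : xplus ∈ X)
    (hxplus_min : ∀ y ∈ X,
      f x + ⟪f' x, xplus - x⟫ + L * Dh xplus x ≤ f x + ⟪f' x, y - x⟫ + L * Dh y x) :
    f xplus - fstar ≤ (L - μ) * Dh (xbar x) x - L * Dh (xbar x) xplus := by
  obtain rfl : Dh = bregmanDist h h' := funext₂ hDh
  subst hXstar
  obtain ⟨⟨hxbar, hfxbar⟩, -⟩ := hbar x hx
  have hstep : IsMinOn (fun y ↦ ⟪f' x, y - x⟫ + L * bregmanDist h h' y x) X xplus :=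
    isMinOn_iff.mpr fun y hy ↦ by linarith [hxplus_min y hy]
  have hthree := hstep.inner_add_bregmanDist_le hX hxplus hxbar (hhdiff xplus)
  have hup := hsmooth x hx xplus hxplus
  have hlow := hquasi x hx
  rw [← hfxbar]
  linarith

/-- Lemma lemma.crux.mirror: one step of mirror descent satisfies
f(x₊) − f* ≤ (L − μ)·D_h(x̄,x) − L·D_h(x̄,x₊). -/
theorem mirror_descent_step_decrease {n : ℕ}
    (f : EuclideanSpace ℝ (Fin n) → ℝ)
    (f' : EuclideanSpace ℝ (Fin n) → EuclideanSpace ℝ (Fin n))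
    (hfconv : ConvexOn ℝ Set.univ f)
    (hfdiff : ∀ x, HasGradientAt f (f' x) x)
    (X : Set (EuclideanSpace ℝ (Fin n))) (hX : Convex ℝ X)
    (h : EuclideanSpace ℝ (Fin n) → ℝ)
    (h' : EuclideanSpace ℝ (Fin n) → EuclideanSpace ℝ (Fin n))
    (hhconv : ConvexOn ℝ Set.univ h)
    (hhdiff : ∀ x, HasGradientAt h (h' x) x)
    (Dh : EuclideanSpace ℝ (Fin n) → EuclideanSpace ℝ (Fin n) → ℝ)
    (hDh : ∀ y x, Dh y x = h y - h x - ⟪h' x, y - x⟫)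
    (fstar : ℝ)
    (hmin : ∃ z ∈ X, f z = fstar ∧ ∀ y ∈ X, fstar ≤ f y)
    (Xstar : Set (EuclideanSpace ℝ (Fin n)))
    (hXstar : Xstar = {x | x ∈ X ∧ f x = fstar})
    (xbar : EuclideanSpace ℝ (Fin n) → EuclideanSpace ℝ (Fin n))
    (hbar : ∀ x ∈ X, xbar x ∈ Xstar ∧ ∀ y ∈ Xstar, Dh (xbar x) x ≤ Dh y x)
    (hbar_unique : ∀ x ∈ X, ∀ y ∈ Xstar, (∀ z ∈ Xstar, Dh y x ≤ Dh z x) → y = xbar x)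
    (L : ℝ) (hL : 0 < L)
    (hsmooth : ∀ x ∈ X, ∀ y ∈ X, f y - f x - ⟪f' x, y - x⟫ ≤ L * Dh y x)
    (μ : ℝ) (hμ : 0 < μ)
    (hquasi : ∀ x ∈ X, μ * Dh (xbar x) x ≤ f (xbar x) - f x - ⟪f' x, xbar x - x⟫)
    (x : EuclideanSpace ℝ (Fin n)) (hx : x ∈ X)
    (xplus : EuclideanSpace ℝ (Fin n)) (hxplus : xplus ∈ X)
    (hxplus_min : ∀ y ∈ X,
      f x + ⟪f' x, xplus - x⟫ + L * Dh xplus x ≤ f x + ⟪f' x, y - x⟫ + L * Dh y x) :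
    f xplus - fstar ≤ (L - μ) * Dh (xbar x) x - L * Dh (xbar x) xplus :=
  mirror_descent_step_decrease_general f f' X hX h h' hhdiff Dh hDh fstar Xstar hXstar xbar hbar L
    hsmooth μ hquasi x hx xplus hxplus hxplus_min
end
end

section
/- Let f : ℝ^n → ℝ be convex and differentiable, X ⊆ ℝ^n convex, and h : ℝ^n → ℝ convex and differentiable with Bregman distance D_h. Suppose f attains its minimum f* on X with nonempty solution set X*, and for each x ∈ X the point x̄ := argmin_{y∈X*} D_h(y,x) exists and is unique. Suppose L > 0 satisfies D_f(y,x) ≤ L·D_h(y,x) for all x,y ∈ X, and μ > 0 satisfies D_f(x̄,x) ≥ μ·D_h(x̄,x) for all x ∈ X. Let x_0 ∈ X and for each k ≥ 0 let x_{k+1} minimize y ↦ ⟨∇f(x_k), y⟩ + L·D_h(y,x_k) over y ∈ X. Then D_h(X*, x_k) ≤ (1 − μ/L)^k·D_h(X*, x_0) for all k ≥ 0, and f(x_k) − f* ≤ L·(1 − μ/L)^k·D_h(X*, x_0) for all k ≥ 1, where D_h(X*, x) := inf_{y∈X*} D_h(y,x). -/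
/-!
Write `D` for the Bregman distance of `h` and `x̄ₖ` for the Bregman projection of `xₖ` onto `X*`.
The first-order optimality condition of the mirror step, combined with the three-point identity
`D(z, p) = D(u, p) + D(z, u) + ⟪∇h u - ∇h p, z - u⟫`, relative smoothness at `(xₖ, xₖ₊₁)` and
relative quasi-strong convexity at `(xₖ, x̄ₖ)`, gives
`f(xₖ₊₁) - f* + L·D(x̄ₖ, xₖ₊₁) ≤ (L - μ)·D(x̄ₖ, xₖ)`.
Since `D(x̄ₖ₊₁, xₖ₊₁) ≤ D(x̄ₖ, xₖ₊₁)` and `f(xₖ₊₁) ≥ f*`, the distance `D(x̄ₖ, xₖ)` to `X*`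
contracts by the factor `1 - μ/L` at every step, and the same inequality bounds the optimality gap.
-/

noncomputable section
open scoped RealInnerProductSpace
open Set

section Bregman

variable {E : Type*} [NormedAddCommGroup E] [InnerProductSpace ℝ E]

theorem ConvexOn.add_inner_sub_le_of_hasGradientAt [CompleteSpace E] {φ : E → ℝ} {g x : E}
    (hconv : ConvexOn ℝ univ φ) (hgrad : HasGradientAt φ g x) (y : E) :
    φ x + ⟪g, y - x⟫ ≤ φ y := by
  have hline : HasDerivAt (φ ∘ AffineMap.lineMap (k := ℝ) x y) ⟪g, y - x⟫ 0 := by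
    have hφ : HasFDerivAt φ (InnerProductSpace.toDual ℝ E g : StrongDual ℝ E)
        (AffineMap.lineMap (k := ℝ) x y (0 : ℝ)) := by
      simpa using hasGradientAt_iff_hasFDerivAt.mp hgrad
    simpa using hφ.comp_hasDerivAt (0 : ℝ) AffineMap.hasDerivAt_lineMap
  have hslope := (hconv.comp_affineMap (AffineMap.lineMap (k := ℝ) x y)).le_slope_of_hasDerivAt
    (mem_univ 0) (mem_univ 1) one_pos hline
  simp only [slope_def_field, Function.comp_apply, AffineMap.lineMap_apply_zero,
    AffineMap.lineMap_apply_one, sub_zero, div_one] at hslope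
  linarith

def bregman (φ : E → ℝ) (φ' : E → E) (y x : E) : ℝ := φ y - φ x - ⟪φ' x, y - x⟫

variable {φ : E → ℝ} {φ' : E → E}

theorem bregman_nonneg [CompleteSpace E] {x : E} (hconv : ConvexOn ℝ univ φ)
    (hgrad : HasGradientAt φ (φ' x) x) (y : E) : 0 ≤ bregman φ φ' y x := by
  have := hconv.add_inner_sub_le_of_hasGradientAt hgrad y
  unfold bregman
  linarith

theorem bregman_three_point (b u p : E) :
    bregman φ φ' b p = bregman φ φ' u p + bregman φ φ' b u + ⟪φ' u - φ' p, b - u⟫ := by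
  simp only [bregman, inner_sub_left, inner_sub_right]
  ring

theorem hasFDerivAt_bregman_left [CompleteSpace E] {u : E} (hgrad : HasGradientAt φ (φ' u) u)
    (x : E) : HasFDerivAt (bregman φ φ' · x) (innerSL ℝ (φ' u - φ' x)) u := by
  have hφ : HasFDerivAt φ (innerSL ℝ (φ' u)) u := hasGradientAt_iff_hasFDerivAt.mp hgrad
  have := (hφ.sub_const (φ x)).sub (((innerSL ℝ (φ' x)).hasFDerivAt).sub_const ⟪φ' x, x⟫)
  rw [map_sub]
  refine this.congr_of_eventuallyEq (Filter.Eventually.of_forall fun y => ?_)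
  simp only [bregman, Pi.sub_apply, innerSL_apply_apply, inner_sub_right]

theorem IsMinOn.bregman_prox_optimality [CompleteSpace E] {X : Set E} (hX : Convex ℝ X)
    {g p u y : E} {L : ℝ} (hmin : IsMinOn (fun z => ⟪g, z⟫ + L * bregman φ φ' z p) X u)
    (hu : u ∈ X) (hy : y ∈ X) (hgrad : HasGradientAt φ (φ' u) u) :
    0 ≤ ⟪g + L • (φ' u - φ' p), y - u⟫ := by
  have hderiv : HasFDerivAt (fun z => ⟪g, z⟫ + L * bregman φ φ' z p)
      (innerSL ℝ (g + L • (φ' u - φ' p))) u := by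
    rw [map_add, map_smul]
    exact (innerSL ℝ g).hasFDerivAt.add ((hasFDerivAt_bregman_left hgrad p).const_smul L)
  have hnonneg := hmin.localize.hasFDerivWithinAt_nonneg hderiv.hasFDerivWithinAt
    (sub_mem_posTangentConeAt_of_segment_subset (hX.segment_subset hu hy))
  simpa only [innerSL_apply_apply] using hnonneg

theorem bregman_prox_descent {f : E → ℝ} {g p u z : E} {L μ : ℝ}
    (hsmooth : f u - f p - ⟪g, u - p⟫ ≤ L * bregman φ φ' u p)
    (hquasi : μ * bregman φ φ' z p ≤ f z - f p - ⟪g, z - p⟫)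
    (hopt : 0 ≤ ⟪g + L • (φ' u - φ' p), z - u⟫) :
    f u - f z + L * bregman φ φ' z u ≤ (L - μ) * bregman φ φ' z p := by
  have hthree := bregman_three_point (φ := φ) (φ' := φ') z u p
  have hinner : ⟪g, u - p⟫ + ⟪g, z - u⟫ = ⟪g, z - p⟫ := by
    rw [← inner_add_right, sub_add_sub_cancel']
  rw [inner_add_left, real_inner_smul_left] at hopt
  linear_combination hsmooth + hquasi + hopt - L * hthree + hinner

end Bregman

theorem mul_le_geom_of_nonneg {a : ℕ → ℝ} {q : ℝ} (ha : ∀ k, 0 ≤ a k)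
    (hstep : ∀ k, a (k + 1) ≤ q * a k) (k : ℕ) : q * a k ≤ q ^ (k + 1) * a 0 := by
  rcases le_or_gt 0 q with hq | hq
  · rw [pow_succ', mul_assoc]
    exact mul_le_mul_of_nonneg_left (le_geom hq k fun j _ => hstep j) hq
  · have ha0 : a 0 = 0 := by nlinarith [ha 0, ha 1, hstep 0]
    rw [ha0, mul_zero]
    exact mul_nonpos_of_nonpos_of_nonneg hq.le (ha k)

theorem le_geom_of_nonneg {a : ℕ → ℝ} {q : ℝ} (ha : ∀ k, 0 ≤ a k)
    (hstep : ∀ k, a (k + 1) ≤ q * a k) : ∀ k, a k ≤ q ^ k * a 0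
  | 0 => by simp
  | k + 1 => (hstep k).trans (mul_le_geom_of_nonneg ha hstep k)

theorem mirror_descent_linear_convergence_general {n : ℕ}
    (f : EuclideanSpace ℝ (Fin n) → ℝ)
    (f' : EuclideanSpace ℝ (Fin n) → EuclideanSpace ℝ (Fin n))
    (X : Set (EuclideanSpace ℝ (Fin n))) (hX : Convex ℝ X)
    (h : EuclideanSpace ℝ (Fin n) → ℝ)
    (h' : EuclideanSpace ℝ (Fin n) → EuclideanSpace ℝ (Fin n))
    (hhconv : ConvexOn ℝ Set.univ h)
    (hhdiff : ∀ x, HasGradientAt h (h' x) x)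
    (Dh : EuclideanSpace ℝ (Fin n) → EuclideanSpace ℝ (Fin n) → ℝ)
    (hDh : ∀ y x, Dh y x = h y - h x - ⟪h' x, y - x⟫)
    (fstar : ℝ)
    (hmin : ∃ z ∈ X, f z = fstar ∧ ∀ y ∈ X, fstar ≤ f y)
    (Xstar : Set (EuclideanSpace ℝ (Fin n)))
    (hXstar : Xstar = {x | x ∈ X ∧ f x = fstar})
    (xbar : EuclideanSpace ℝ (Fin n) → EuclideanSpace ℝ (Fin n))
    (hbar : ∀ x ∈ X, xbar x ∈ Xstar ∧ ∀ y ∈ Xstar, Dh (xbar x) x ≤ Dh y x)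
    (L : ℝ) (hL : 0 < L)
    (hsmooth : ∀ x ∈ X, ∀ y ∈ X, f y - f x - ⟪f' x, y - x⟫ ≤ L * Dh y x)
    (μ : ℝ)
    (hquasi : ∀ x ∈ X, μ * Dh (xbar x) x ≤ f (xbar x) - f x - ⟪f' x, xbar x - x⟫)
    (x : ℕ → EuclideanSpace ℝ (Fin n))
    (hx0 : x 0 ∈ X)
    (hiter : ∀ k : ℕ, x (k + 1) ∈ X ∧ ∀ y ∈ X,
      ⟪f' (x k), x (k + 1)⟫ + L * Dh (x (k + 1)) (x k) ≤ ⟪f' (x k), y⟫ + L * Dh y (x k)) :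
    (∀ k : ℕ, sInf {r | ∃ y ∈ Xstar, r = Dh y (x k)}
        ≤ (1 - μ / L) ^ k * sInf {r | ∃ y ∈ Xstar, r = Dh y (x 0)}) ∧
    (∀ k : ℕ, 1 ≤ k → f (x k) - fstar
        ≤ L * ((1 - μ / L) ^ k * sInf {r | ∃ y ∈ Xstar, r = Dh y (x 0)})) := by
  obtain rfl : Dh = bregman h h' := funext₂ hDh
  subst hXstar
  obtain ⟨-, -, -, hfstar⟩ := hmin
  have hxX : ∀ k, x k ∈ X := fun k => Nat.rec hx0 (fun k _ => (hiter k).1) k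
  set a := fun k => bregman h h' (xbar (x k)) (x k)
  have ha_nonneg : ∀ k, 0 ≤ a k := fun k => bregman_nonneg hhconv (hhdiff _) _
  have hsInf : ∀ k, sInf {r | ∃ y ∈ {x | x ∈ X ∧ f x = fstar}, r = bregman h h' y (x k)} = a k :=
    fun k => IsLeast.csInf_eq ⟨⟨_, (hbar _ (hxX k)).1, rfl⟩,
      by rintro r ⟨y, hy, rfl⟩; exact (hbar _ (hxX k)).2 y hy⟩
  have hdescent : ∀ k, f (x (k + 1)) - fstar + L * bregman h h' (xbar (x k)) (x (k + 1))
      ≤ L * ((1 - μ / L) * a k) := by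
    intro k
    obtain ⟨⟨hzX, hfz⟩, -⟩ := hbar _ (hxX k)
    rw [← hfz, ← mul_assoc, mul_one_sub, mul_div_cancel₀ μ hL.ne']
    exact bregman_prox_descent (hsmooth _ (hxX k) _ (hiter k).1) (hquasi _ (hxX k))
      ((isMinOn_iff.mpr (hiter k).2).bregman_prox_optimality hX (hiter k).1 hzX (hhdiff _))
  have hcontract : ∀ k, a (k + 1) ≤ (1 - μ / L) * a k := by
    intro k
    have hnext : a (k + 1) ≤ bregman h h' (xbar (x k)) (x (k + 1)) :=
      (hbar _ (hxX (k + 1))).2 _ (hbar _ (hxX k)).1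
    refine le_of_mul_le_mul_left ?_ hL
    linarith [hdescent k, hfstar _ (hiter k).1, mul_le_mul_of_nonneg_left hnext hL.le]
  refine ⟨fun k => ?_, fun k hk => ?_⟩
  · rw [hsInf, hsInf]
    exact le_geom_of_nonneg ha_nonneg hcontract k
  · obtain ⟨m, rfl⟩ := Nat.exists_eq_add_of_le' hk
    rw [hsInf]
    have hgap := mul_nonneg hL.le (bregman_nonneg hhconv (hhdiff (x (m + 1))) (xbar (x m)))
    calc f (x (m + 1)) - fstar ≤ L * ((1 - μ / L) * a m) := by linarith [hdescent m]
      _ ≤ L * ((1 - μ / L) ^ (m + 1) * a 0) :=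
          mul_le_mul_of_nonneg_left (mul_le_geom_of_nonneg ha_nonneg hcontract m) hL.le

/-- Proposition prop.lin.mirror: linear convergence of mirror descent under
relative smoothness and relative quasi-strong convexity. -/
theorem mirror_descent_linear_convergence {n : ℕ}
    (f : EuclideanSpace ℝ (Fin n) → ℝ)
    (f' : EuclideanSpace ℝ (Fin n) → EuclideanSpace ℝ (Fin n))
    (hfconv : ConvexOn ℝ Set.univ f)
    (hfdiff : ∀ x, HasGradientAt f (f' x) x)
    (X : Set (EuclideanSpace ℝ (Fin n))) (hX : Convex ℝ X)
    (h : EuclideanSpace ℝ (Fin n) → ℝ)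
    (h' : EuclideanSpace ℝ (Fin n) → EuclideanSpace ℝ (Fin n))
    (hhconv : ConvexOn ℝ Set.univ h)
    (hhdiff : ∀ x, HasGradientAt h (h' x) x)
    (Dh : EuclideanSpace ℝ (Fin n) → EuclideanSpace ℝ (Fin n) → ℝ)
    (hDh : ∀ y x, Dh y x = h y - h x - ⟪h' x, y - x⟫)
    (fstar : ℝ)
    (hmin : ∃ z ∈ X, f z = fstar ∧ ∀ y ∈ X, fstar ≤ f y)
    (Xstar : Set (EuclideanSpace ℝ (Fin n)))
    (hXstar : Xstar = {x | x ∈ X ∧ f x = fstar})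
    (xbar : EuclideanSpace ℝ (Fin n) → EuclideanSpace ℝ (Fin n))
    (hbar : ∀ x ∈ X, xbar x ∈ Xstar ∧ ∀ y ∈ Xstar, Dh (xbar x) x ≤ Dh y x)
    (hbar_unique : ∀ x ∈ X, ∀ y ∈ Xstar, (∀ z ∈ Xstar, Dh y x ≤ Dh z x) → y = xbar x)
    (L : ℝ) (hL : 0 < L)
    (hsmooth : ∀ x ∈ X, ∀ y ∈ X, f y - f x - ⟪f' x, y - x⟫ ≤ L * Dh y x)
    (μ : ℝ) (hμ : 0 < μ)
    (hquasi : ∀ x ∈ X, μ * Dh (xbar x) x ≤ f (xbar x) - f x - ⟪f' x, xbar x - x⟫)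
    (x : ℕ → EuclideanSpace ℝ (Fin n))
    (hx0 : x 0 ∈ X)
    (hiter : ∀ k : ℕ, x (k + 1) ∈ X ∧ ∀ y ∈ X,
      ⟪f' (x k), x (k + 1)⟫ + L * Dh (x (k + 1)) (x k) ≤ ⟪f' (x k), y⟫ + L * Dh y (x k)) :
    (∀ k : ℕ, sInf {r | ∃ y ∈ Xstar, r = Dh y (x k)}
        ≤ (1 - μ / L) ^ k * sInf {r | ∃ y ∈ Xstar, r = Dh y (x 0)}) ∧
    (∀ k : ℕ, 1 ≤ k → f (x k) - fstar
        ≤ L * ((1 - μ / L) ^ k * sInf {r | ∃ y ∈ Xstar, r = Dh y (x 0)})) :=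
  mirror_descent_linear_convergence_general f f' X hX h h' hhconv hhdiff Dh hDh fstar hmin Xstar
    hXstar xbar hbar L hL hsmooth μ hquasi x hx0 hiter
end
end

section
/- Let f : ℝ^n → ℝ be convex and differentiable and X ⊆ ℝ^n be a compact convex set, with f* := min_{x∈X} f(x), X* := argmin_{x∈X} f(x), and radial distance 𝔯(y,x) := inf{ρ > 0 : y − x = ρ·(u − x) for some u ∈ X} and R(y,x) := 𝔯(y,x)²/2. Assume for each x ∈ X the point x̄ := argmin_{y∈X*} R(y,x) exists and is unique. Suppose L > 0 satisfies D_f(x + α(u − x), x) ≤ Lα²/2 for all x,u ∈ X and α ∈ [0,1], and let μ := max{μ*, μ♯/4} > 0, where μ* := sup{μ ≥ 0 : D_f(x̄,x) ≥ μ·R(x̄,x) for all x ∈ X} and μ♯ := sup{μ ≥ 0 : f(x) − f* ≥ μ·R(x̄,x) for all x ∈ X}. Let x_0 ∈ X and for each k ≥ 0 let u_k minimize y ↦ ⟨∇f(x_k), y⟩ over X, let α_k minimize α ↦ f(x_k) + α⟨∇f(x_k), u_k − x_k⟩ + Lα²/2 over α ∈ [0,1], and set x_{k+1} := x_k + α_k(u_k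 − x_k). Then f(x_k) − f* ≤ (1 − μ/L)^k·(f(x_0) − f*) for all k ≥ 0. -/
set_option maxHeartbeats 1000000

noncomputable section
open scoped RealInnerProductSpace
open Set Filter

private lemma grad_ineq_FW {n : ℕ}
    (f : EuclideanSpace ℝ (Fin n) → ℝ)
    (f' : EuclideanSpace ℝ (Fin n) → EuclideanSpace ℝ (Fin n))
    (hfconv : ConvexOn ℝ Set.univ f)
    (hfdiff : ∀ x, HasGradientAt f (f' x) x)
    (x y : EuclideanSpace ℝ (Fin n)) :
    f x + ⟪f' x, y - x⟫ ≤ f y := by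
  set γ : ℝ → EuclideanSpace ℝ (Fin n) := fun t => x + t • (y - x) with hγdef
  have hγ0 : γ 0 = x := by simp [hγdef]
  have hpath : HasDerivAt γ (y - x) 0 := by
    have h1 : HasDerivAt (fun t : ℝ => t • (y - x)) ((1:ℝ) • (y - x)) 0 :=
      (hasDerivAt_id (0:ℝ)).smul_const (y - x)
    simpa [hγdef, one_smul] using h1.const_add x
  have hg : HasDerivAt (f ∘ γ) ⟪f' x, y - x⟫ 0 := by
    have hf : HasFDerivAt f (InnerProductSpace.toDual ℝ _ (f' x)) (γ 0) := by
      rw [hγ0]; exact (hfdiff x).hasFDerivAt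
    simpa using hf.comp_hasDerivAt 0 hpath
  have hslope : ∀ t ∈ Ioc (0:ℝ) 1, slope (f ∘ γ) 0 t ≤ f y - f x := by
    intro t ht
    have hcvx := hfconv.2 (mem_univ x) (mem_univ y) (by linarith [ht.2] : (0:ℝ) ≤ 1 - t)
      (le_of_lt ht.1) (by ring)
    have heq : (1 - t) • x + t • y = γ t := by
      simp [hγdef, smul_sub, sub_smul, one_smul]; abel
    rw [heq] at hcvx
    rw [smul_eq_mul, smul_eq_mul] at hcvx
    have h2 : (f ∘ γ) t - (f ∘ γ) 0 ≤ t * (f y - f x) := by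
      simp only [Function.comp_apply, hγ0]; nlinarith
    rw [slope_def_field, div_eq_mul_inv, sub_zero]
    calc ((f ∘ γ) t - (f ∘ γ) 0) * t⁻¹ ≤ (t * (f y - f x)) * t⁻¹ := by
          apply mul_le_mul_of_nonneg_right h2 (by simp [inv_nonneg]; exact ht.1.le)
      _ = f y - f x := by field_simp [ne_of_gt ht.1]
  have htend : Filter.Tendsto (slope (f ∘ γ) 0) (nhdsWithin 0 (Ioi 0)) (nhds ⟪f' x, y - x⟫) := by
    have := hasDerivAt_iff_tendsto_slope.1 hg
    exact this.mono_left (nhdsWithin_mono 0 (fun t ht => ne_of_gt ht))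
  have hle : ⟪f' x, y - x⟫ ≤ f y - f x := by
    refine le_of_tendsto htend ?_
    filter_upwards [Ioc_mem_nhdsGT (zero_lt_one)] with t ht using hslope t ht
  linarith

/-- Proposition prop.lin.FW: linear convergence of the Frank-Wolfe algorithm
in terms of the relative constants for the radial distance function. -/
theorem frank_wolfe_linear_convergence {n : ℕ}
    (f : EuclideanSpace ℝ (Fin n) → ℝ)
    (f' : EuclideanSpace ℝ (Fin n) → EuclideanSpace ℝ (Fin n))
    (hfconv : ConvexOn ℝ Set.univ f)
    (hfdiff : ∀ x, HasGradientAt f (f' x) x)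
    (X : Set (EuclideanSpace ℝ (Fin n)))
    (hX : Convex ℝ X) (hXcompact : IsCompact X)
    (fstar : ℝ)
    (hmin : ∃ z ∈ X, f z = fstar ∧ ∀ y ∈ X, fstar ≤ f y)
    (Xstar : Set (EuclideanSpace ℝ (Fin n)))
    (hXstar : Xstar = {x | x ∈ X ∧ f x = fstar})
    (R : EuclideanSpace ℝ (Fin n) → EuclideanSpace ℝ (Fin n) → ℝ)
    (hR : ∀ y x, R y x =
      (sInf {ρ : ℝ | 0 < ρ ∧ ∃ u ∈ X, y - x = ρ • (u - x)}) ^ 2 / 2)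
    (xbar : EuclideanSpace ℝ (Fin n) → EuclideanSpace ℝ (Fin n))
    (hbar : ∀ x ∈ X, xbar x ∈ Xstar ∧ ∀ y ∈ Xstar, R (xbar x) x ≤ R y x)
    (hbar_unique : ∀ x ∈ X, ∀ y ∈ Xstar, (∀ z ∈ Xstar, R y x ≤ R z x) → y = xbar x)
    (L : ℝ) (hL : 0 < L)
    (hcurv : ∀ x ∈ X, ∀ u ∈ X, ∀ α ∈ Set.Icc (0 : ℝ) 1,
      f (x + α • (u - x)) - f x - ⟪f' x, α • (u - x)⟫ ≤ L * α ^ 2 / 2)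
    (μstar μsharp μ : ℝ)
    (hμstar : μstar = sSup {μ' : ℝ | 0 ≤ μ' ∧ ∀ x ∈ X,
      μ' * R (xbar x) x ≤ f (xbar x) - f x - ⟪f' x, xbar x - x⟫})
    (hμsharp : μsharp = sSup {μ' : ℝ | 0 ≤ μ' ∧ ∀ x ∈ X,
      μ' * R (xbar x) x ≤ f x - fstar})
    (hμ : μ = max μstar (μsharp / 4)) (hμpos : 0 < μ)
    (x u : ℕ → EuclideanSpace ℝ (Fin n)) (α : ℕ → ℝ)
    (hx0 : x 0 ∈ X)
    (hu : ∀ k, u k ∈ X ∧ ∀ y ∈ X, ⟪f' (x k), u k⟫ ≤ ⟪f' (x k), y⟫)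
    (hα : ∀ k, α k ∈ Set.Icc (0 : ℝ) 1 ∧ ∀ β ∈ Set.Icc (0 : ℝ) 1,
      f (x k) + α k * ⟪f' (x k), u k - x k⟫ + L * (α k) ^ 2 / 2
        ≤ f (x k) + β * ⟪f' (x k), u k - x k⟫ + L * β ^ 2 / 2)
    (hrec : ∀ k, x (k + 1) = x k + α k • (u k - x k)) :
    ∀ k : ℕ, f (x k) - fstar ≤ (1 - μ / L) ^ k * (f (x 0) - fstar) := by
  obtain ⟨z, hzX, hzf, hlb⟩ := hmin
  have hbar' : ∀ y ∈ X, xbar y ∈ X ∧ f (xbar y) = fstar := by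
    intro y hy
    have h1 := (hbar y hy).1
    rw [hXstar] at h1
    exact h1
  have hDnn : ∀ y ∈ X, 0 ≤ f (xbar y) - f y - ⟪f' y, xbar y - y⟫ := by
    intro y hy
    have := grad_ineq_FW f f' hfconv hfdiff y (xbar y)
    linarith
  have hcontf : Continuous f :=
    continuous_iff_continuousAt.2 (fun p => (hfdiff p).differentiableAt.continuousAt)
  -- the key per-point structural lemma
  have key : ∀ w ∈ X, f w ≠ fstar →
      ∃ rr : ℝ, ∃ uu : EuclideanSpace ℝ (Fin n), uu ∈ X ∧ 0 < rr ∧ rr ≤ 1 ∧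
        xbar w - w = rr • (uu - w) ∧ R (xbar w) w = rr ^ 2 / 2 ∧
        (rr < 1 → f w - fstar ≤ L / 2) ∧
        (f w - fstar) * (1 - rr) ≤ rr * L / 2 ∧
        f (xbar w) - f w - ⟪f' w, xbar w - w⟫ ≤ L * rr ^ 2 / 2 := by
    have hgrad : ∀ p q : EuclideanSpace ℝ (Fin n), f p + ⟪f' p, q - p⟫ ≤ f q :=
      fun p q => grad_ineq_FW f f' hfconv hfdiff p q
    have hfconv_pt : ∀ p q : EuclideanSpace ℝ (Fin n), ∀ lam : ℝ, 0 ≤ lam → lam ≤ 1 →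
        f ((1 - lam) • p + lam • q) ≤ (1 - lam) * f p + lam * f q := by
      intro p q lam h0 h1
      have := hfconv.2 (mem_univ p) (mem_univ q) (by linarith : (0:ℝ) ≤ 1 - lam) h0 (by ring)
      simpa [smul_eq_mul] using this
    intro w hw hfw
    obtain ⟨hxbX, hxbf⟩ := hbar' w hw
    set xb := xbar w with hxbdef
    set S := {ρ : ℝ | 0 < ρ ∧ ∃ u ∈ X, xb - w = ρ • (u - w)} with hSdef
    have h1S : (1:ℝ) ∈ S := ⟨one_pos, xb, hxbX, by simp⟩
    have hSne : S.Nonempty := ⟨1, h1S⟩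
    have hSbdd : BddBelow S := ⟨0, fun ρ hρ => hρ.1.le⟩
    set rr := sInf S with hrrdef
    have hrr1 : rr ≤ 1 := csInf_le hSbdd h1S
    have hwne : xb ≠ w := by
      intro h
      exact hfw (by rw [← hxbf, h])
    have hdpos : 0 < ‖xb - w‖ := by
      rw [norm_sub_pos_iff]; exact hwne
    -- a uniform bound on X
    obtain ⟨C, hC⟩ := isBounded_iff_forall_norm_le.1 hXcompact.isBounded
    have hC0 : 0 ≤ C := le_trans (norm_nonneg _) (hC xb hxbX)
    have hrlow : ∀ ρ ∈ S, ‖xb - w‖ / (C + ‖w‖ + 1) ≤ ρ := by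
      intro ρ hρ
      obtain ⟨hρ0, v, hvX, hveq⟩ := hρ
      have h1 : ‖xb - w‖ = ρ * ‖v - w‖ := by
        rw [hveq, norm_smul, Real.norm_eq_abs, abs_of_pos hρ0]
      have h2 : ‖v - w‖ ≤ C + ‖w‖ + 1 := by
        have := norm_sub_le v w
        have := hC v hvX
        linarith
      rw [div_le_iff₀ (by positivity)]
      rw [h1]
      have := mul_le_mul_of_nonneg_left h2 hρ0.le
      linarith
    have hrpos : 0 < rr := by
      have h1 : ‖xb - w‖ / (C + ‖w‖ + 1) ≤ rr := le_csInf hSne hrlow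
      have h2 : 0 < ‖xb - w‖ / (C + ‖w‖ + 1) := by positivity
      linarith
    -- attainment via a sequence
    obtain ⟨ρseq, _, hρlim, hρmem⟩ := exists_seq_tendsto_sInf hSne hSbdd
    have humem : ∀ m : ℕ, w + (ρseq m)⁻¹ • (xb - w) ∈ X := by
      intro m
      obtain ⟨hρ0, v, hvX, hveq⟩ := hρmem m
      have : w + (ρseq m)⁻¹ • (xb - w) = v := by
        rw [hveq, smul_smul, inv_mul_cancel₀ (ne_of_gt hρ0), one_smul]
        abel
      rw [this]; exact hvX
    set uu := w + rr⁻¹ • (xb - w) with huudef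
    have hulim : Tendsto (fun m => w + (ρseq m)⁻¹ • (xb - w)) atTop (nhds uu) := by
      have h2 := (hρlim.inv₀ (ne_of_gt hrpos)).smul_const (xb - w)
      exact h2.const_add w
    have huuX : uu ∈ X := hXcompact.isClosed.mem_of_tendsto hulim (Eventually.of_forall humem)
    have heqn : xb - w = rr • (uu - w) := by
      rw [huudef]
      rw [add_sub_cancel_left, smul_smul, mul_inv_cancel₀ (ne_of_gt hrpos), one_smul]
    have hRform : R xb w = rr ^ 2 / 2 := by rw [hR]
    -- gradient inequality facts
    have hG1 : f w - fstar ≤ rr * ⟪f' w, w - uu⟫ := by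
      have h1 := hgrad w xb
      rw [heqn, real_inner_smul_right, hxbf] at h1
      have : ⟪f' w, uu - w⟫ = -⟪f' w, w - uu⟫ := by
        rw [← inner_neg_right]; congr 1; abel
      rw [this] at h1
      linarith
    have hfuu : fstar ≤ f uu := hlb uu huuX
    have hG2 : ⟪f' w, w - uu⟫ ≤ (f w - fstar) + L / 2 := by
      have h1 := hcurv w hw uu huuX 1 ⟨zero_le_one, le_refl 1⟩
      rw [one_smul] at h1
      have h2 : w + (uu - w) = uu := by abel
      rw [h2] at h1
      have : ⟪f' w, uu - w⟫ = -⟪f' w, w - uu⟫ := by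
        rw [← inner_neg_right]; congr 1; abel
      rw [this] at h1
      nlinarith
    have hb10 : (f w - fstar) * (1 - rr) ≤ rr * L / 2 := by
      have h1 : rr * ⟪f' w, w - uu⟫ ≤ rr * ((f w - fstar) + L / 2) :=
        mul_le_mul_of_nonneg_left hG2 hrpos.le
      nlinarith
    -- curvature bound on D
    have hD : f xb - f w - ⟪f' w, xb - w⟫ ≤ L * rr ^ 2 / 2 := by
      have h1 := hcurv w hw uu huuX rr ⟨hrpos.le, hrr1⟩
      rw [← heqn] at h1
      have h2 : w + (xb - w) = xb := by abel
      rw [h2] at h1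
      exact h1
    -- the L/2 bound when rr < 1
    have hb11 : rr < 1 → f w - fstar ≤ L / 2 := by
      intro hrlt
      have hmain : ∀ lam : ℝ, 0 < lam → lam ≤ 1 →
          f w - fstar ≤ L / 2 + lam * (f uu - fstar) := by
        intro lam hl0 hl1
        have hb0 : 0 < rr + lam * (1 - rr) := by nlinarith
        have hb1 : rr + lam * (1 - rr) ≤ 1 := by nlinarith
        have hbr : rr < rr + lam * (1 - rr) := by nlinarith
        set b := rr + lam * (1 - rr) with hbdef
        set yb := w + b • (uu - w) with hybdef
        have hybX : yb ∈ X := by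
          have hcomb : w + b • (uu - w) = (1 - b) • w + b • uu := by
            simp [smul_sub, sub_smul, one_smul]; abel
          rw [hybdef, hcomb]
          exact hX hw huuX (by linarith) hb0.le (by ring)
        have hxbyb : xb - yb = (rr - b) • (uu - w) := by
          rw [hybdef]
          have h9 : xb - (w + b • (uu - w)) = (xb - w) - b • (uu - w) := by abel
          rw [h9, heqn, ← sub_smul]
        have hphi : 0 ≤ ⟪f' yb, uu - w⟫ := by
          by_contra hng
          push_neg at hng
          have h1 := hgrad yb xb
          rw [hxbyb, real_inner_smul_right, hxbf] at h1
          have hp : 0 < (rr - b) * ⟪f' yb, uu - w⟫ :=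
            mul_pos_of_neg_of_neg (by linarith) hng
          linarith [hlb yb hybX]
        have hwyb : w - yb = -b • (uu - w) := by
          rw [hybdef, neg_smul]; abel
        have hcv := hcurv yb hybX w hw 1 ⟨zero_le_one, le_refl 1⟩
        rw [one_smul] at hcv
        have h3 : yb + (w - yb) = w := by abel
        rw [h3, hwyb, real_inner_smul_right] at hcv
        -- hcv : f w - f yb - (-b * ip) ≤ L * 1 ^ 2 / 2
        have hfyb : f yb ≤ (1 - lam) * fstar + lam * f uu := by
          have hxbw : xb = w + rr • (uu - w) := by rw [← heqn]; abel
          have hcomb2 : yb = (1 - lam) • xb + lam • uu := by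
            rw [hybdef, hbdef, hxbw]
            module
          rw [hcomb2]
          have h4 := hfconv_pt xb uu lam hl0.le hl1
          rw [hxbf] at h4
          exact h4
        nlinarith [mul_nonneg hb0.le hphi]
      by_contra hcon
      push_neg at hcon
      have hc0 : 0 ≤ f uu - fstar := by linarith
      rcases eq_or_lt_of_le hc0 with hc | hc
      · have := hmain 1 one_pos (le_refl 1)
        rw [← hc] at this
        linarith
      · set lam := (f w - fstar - L / 2) / (2 * (f uu - fstar)) with hlamdef
        have hlam0 : 0 < lam := by
          rw [hlamdef]
          apply div_pos (by linarith) (by linarith)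
        rcases le_or_gt lam 1 with hlam1 | hlam1
        · have h5 := hmain lam hlam0 hlam1
          have h6 : lam * (f uu - fstar) = (f w - fstar - L / 2) / 2 := by
            rw [hlamdef]
            field_simp
          rw [h6] at h5
          linarith
        · have h5 := hmain 1 one_pos (le_refl 1)
          rw [hlamdef, lt_div_iff₀ (by positivity)] at hlam1
          linarith
    exact ⟨rr, uu, huuX, hrpos, hrr1, heqn, hRform, hb11, hb10, hD⟩
  -- bound on elements of the sharp constraint set
  have hsharp_elem : ∀ μ' : ℝ, 0 ≤ μ' → (∀ y ∈ X, μ' * R (xbar y) y ≤ f y - fstar) →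
      ∀ w ∈ X, f w ≠ fstar → ∀ rr : ℝ, 0 < rr → rr ≤ 1 →
      R (xbar w) w = rr ^ 2 / 2 →
      (rr < 1 → f w - fstar ≤ L / 2) →
      (f w - fstar) * (1 - rr) ≤ rr * L / 2 →
      μ' * rr ≤ 2 * L := by
    intro μ' hμ'0 hcon w hwX hne rr hr0 hr1 hRf hb11 hb10
    have hcw : μ' * (rr ^ 2 / 2) ≤ f w - fstar := by
      have := hcon w hwX
      rw [hRf] at this
      exact this
    rcases lt_or_eq_of_le hr1 with hlt | heq1
    · rcases le_or_gt rr (1 / 2) with hhalf | hhalf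
      · -- small rr : use hb10
        have h1 : μ' * (rr ^ 2 / 2) * (1 - rr) ≤ (f w - fstar) * (1 - rr) :=
          mul_le_mul_of_nonneg_right hcw (by linarith)
        have hA : μ' * (rr ^ 2 / 2) * (1 - rr) ≤ rr * L / 2 := le_trans h1 hb10
        have hB : (0:ℝ) ≤ μ' * rr ^ 2 := by positivity
        have hC : (0:ℝ) ≤ μ' * rr ^ 2 * (1 / 2 - rr) :=
          mul_nonneg hB (by linarith)
        have h2 : μ' * rr * rr ≤ 2 * L * rr := by nlinarith [hA, hC]
        have h3 := le_of_mul_le_mul_right (by linarith [h2] : μ' * rr * rr ≤ (2 * L) * rr) hr0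
        exact h3
      · -- big rr : use hb11
        have hLb := hb11 hlt
        have h2 : μ' * rr * rr ≤ 2 * L * rr := by nlinarith
        exact le_of_mul_le_mul_right (by linarith [h2]) hr0
    · -- rr = 1
      subst heq1
      by_contra hgt
      push_neg at hgt
      have hμL : L < μ' := by linarith
      set c := (L + μ') / 4 with hcdef
      have hcL : L / 2 < c := by rw [hcdef]; linarith
      have hcμ : c < μ' / 2 := by rw [hcdef]; linarith
      have hc0 : 0 < c := by linarith [hL]
      set ψ : ℝ → ℝ := fun t => f (w + t • (xbar w - w)) - fstar with hψdef
      have hψcont : ContinuousOn ψ (Icc 0 1) := by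
        apply Continuous.continuousOn
        apply Continuous.sub _ continuous_const
        exact hcontf.comp (continuous_const.add (continuous_id.smul continuous_const))
      have hψ0 : ψ 0 = f w - fstar := by simp [hψdef]
      have hψ1 : ψ 1 = 0 := by
        have h9 : w + (1:ℝ) • (xbar w - w) = xbar w := by
          rw [one_smul]; abel
        simp [hψdef, h9, (hbar' w hwX).2]
      have hcmem : c ∈ Icc (ψ 1) (ψ 0) := by
        constructor
        · rw [hψ1]; exact hc0.le
        · rw [hψ0]; nlinarith [hcw]
      obtain ⟨t₀, ht₀mem, ht₀⟩ := intermediate_value_Icc' zero_le_one hψcont hcmem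
      set m := w + t₀ • (xbar w - w) with hmdef
      have hmX : m ∈ X := by
        have hcomb : w + t₀ • (xbar w - w) = (1 - t₀) • w + t₀ • (xbar w) := by
          simp [smul_sub, sub_smul, one_smul]; abel
        rw [hmdef, hcomb]
        exact hX hwX (hbar' w hwX).1 (by linarith [ht₀mem.2]) ht₀mem.1 (by ring)
      have hfm : f m - fstar = c := ht₀
      have hfmne : f m ≠ fstar := by
        intro h
        rw [h] at hfm
        simp at hfm
        linarith
      obtain ⟨rm, um, humX, hrm0, hrm1, heqm, hRm, hb11m, hb10m, hDm⟩ := key m hmX hfmne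
      have hconm : μ' * (rm ^ 2 / 2) ≤ f m - fstar := by
        have := hcon m hmX
        rw [hRm] at this
        exact this
      rcases lt_or_eq_of_le hrm1 with hltm | heqm1
      · have := hb11m hltm
        linarith [hfm]
      · subst heqm1
        rw [hfm] at hconm
        nlinarith
  -- iterates remain in X
  have hXmem : ∀ k, x k ∈ X := by
    intro k
    induction k with
    | zero => exact hx0
    | succ k ih =>
      rw [hrec k]
      have hcomb : x k + α k • (u k - x k) = (1 - α k) • x k + α k • u k := by
        simp [smul_sub, sub_smul, one_smul]; abel
      rw [hcomb]
      obtain ⟨h0, h1⟩ := (hα k).1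
      exact hX ih (hu k).1 (by linarith) h0 (by ring)
  have hstep : ∀ k, f (x (k + 1)) - fstar ≤ (1 - μ / L) * (f (x k) - fstar) := by
    intro k
    have hxkX := hXmem k
    have hquad : ∀ β ∈ Icc (0:ℝ) 1,
        f (x (k + 1)) ≤ f (x k) + β * ⟪f' (x k), u k - x k⟫ + L * β ^ 2 / 2 := by
      intro β hβ
      have hα1 := (hα k).1
      have hopt := (hα k).2 β hβ
      have hc := hcurv (x k) hxkX (u k) (hu k).1 (α k) hα1
      rw [real_inner_smul_right] at hc
      rw [hrec k]
      linarith
    by_cases hfx : f (x k) = fstar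
    · have h0 := hquad 0 ⟨le_refl 0, zero_le_one⟩
      simp at h0
      rw [hfx] at h0 ⊢
      simp
      linarith
    · obtain ⟨rr, uu, huuX, hr0, hr1, heqn, hRf, hb11, hb10, hD⟩ := key (x k) hxkX hfx
      set h := f (x k) - fstar with hhdef
      set D := f (xbar (x k)) - f (x k) - ⟪f' (x k), xbar (x k) - x k⟫ with hDdef
      have hh0 : 0 ≤ h := by
        rw [hhdef]; linarith [hlb (x k) hxkX]
      have hD0 : 0 ≤ D := hDnn (x k) hxkX
      have hfxb := (hbar' (x k) hxkX).2
      have hip : ⟪f' (x k), u k - x k⟫ ≤ -(h + D) / rr := by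
        have h1 := (hu k).2 uu huuX
        have h2 : ⟪f' (x k), u k - x k⟫ ≤ ⟪f' (x k), uu - x k⟫ := by
          rw [inner_sub_right, inner_sub_right]
          linarith
        have h3 : ⟪f' (x k), xbar (x k) - x k⟫ = rr * ⟪f' (x k), uu - x k⟫ := by
          rw [heqn, real_inner_smul_right]
        have h4 : ⟪f' (x k), xbar (x k) - x k⟫ = -(h + D) := by
          rw [hhdef, hDdef, hfxb]; ring
        have h5 : ⟪f' (x k), uu - x k⟫ = -(h + D) / rr := by
          rw [← h4, h3]
          field_simp
        linarith [h2, h5.le, h5.ge]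
      have hRpos : (0:ℝ) < rr ^ 2 / 2 := by positivity
      rcases le_total (μsharp / 4) μstar with hcase | hcase
      · -- μ = μstar
        have hμeq : μ = μstar := by rw [hμ, max_eq_left hcase]
        have hμstar0 : 0 ≤ μstar := by
          rw [hμstar]
          exact Real.sSup_nonneg (fun a ha => ha.1)
        have hμstarL : μstar ≤ L := by
          rw [hμstar]
          apply Real.sSup_le _ hL.le
          rintro μ' ⟨hμ'0, hμ'c⟩
          have h6 := hμ'c (x k) hxkX
          rw [hRf] at h6
          -- μ' * (rr^2/2) ≤ D ≤ L * rr^2/2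
          nlinarith [hD, h6]
        have hμstarD : μstar * (rr ^ 2 / 2) ≤ D := by
          have h7 : μstar ≤ D / (rr ^ 2 / 2) := by
            rw [hμstar]
            apply Real.sSup_le _ (div_nonneg hD0 hRpos.le)
            rintro μ' ⟨hμ'0, hμ'c⟩
            have h6 := hμ'c (x k) hxkX
            rw [hRf] at h6
            exact (le_div_iff₀ hRpos).2 h6
          calc μstar * (rr ^ 2 / 2) ≤ (D / (rr ^ 2 / 2)) * (rr ^ 2 / 2) :=
                mul_le_mul_of_nonneg_right h7 hRpos.le
            _ = D := by field_simp
        set β := μstar * rr / L with hβdef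
        have hβ0 : 0 ≤ β := by rw [hβdef]; positivity
        have hβ1 : β ≤ 1 := by
          rw [hβdef, div_le_one hL]
          nlinarith
        have hq := hquad β ⟨hβ0, hβ1⟩
        have hip2 : β * ⟪f' (x k), u k - x k⟫ ≤ β * (-(h + D) / rr) :=
          mul_le_mul_of_nonneg_left hip hβ0
        have hβr : β * (-(h + D) / rr) = -(μstar / L) * (h + D) := by
          rw [hβdef]
          field_simp
        have hLβ : L * β ^ 2 / 2 = μstar ^ 2 * rr ^ 2 / (2 * L) := by
          rw [hβdef]
          field_simp
        have he : (μstar / L) * (μstar * (rr ^ 2 / 2)) = μstar ^ 2 * rr ^ 2 / (2 * L) := by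
          field_simp
        have h8 : (μstar / L) * (μstar * (rr ^ 2 / 2)) ≤ (μstar / L) * D :=
          mul_le_mul_of_nonneg_left hμstarD (div_nonneg hμstar0 hL.le)
        rw [hμeq]
        have hgoal : f (x (k + 1)) ≤ fstar + (1 - μstar / L) * h := by
          have hfxk : f (x k) = fstar + h := by rw [hhdef]; ring
          rw [hβr] at hip2
          rw [hLβ] at hq
          nlinarith [hq, hip2, h8, he]
        linarith
      · -- μ = μsharp / 4
        have hμeq : μ = μsharp / 4 := by rw [hμ, max_eq_right hcase]
        have hμs0 : 0 ≤ μsharp := by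
          rw [hμsharp]
          exact Real.sSup_nonneg (fun a ha => ha.1)
        have hμsr : μsharp * rr ≤ 2 * L := by
          have hs : μsharp ≤ 2 * L / rr := by
            rw [hμsharp]
            apply Real.sSup_le _ (by positivity)
            rintro μ' ⟨hμ'0, hμ'c⟩
            have h6 := hsharp_elem μ' hμ'0 hμ'c (x k) hxkX hfx rr hr0 hr1 hRf hb11 hb10
            exact (le_div_iff₀ hr0).2 h6
          calc μsharp * rr ≤ (2 * L / rr) * rr := mul_le_mul_of_nonneg_right hs hr0.le
            _ = 2 * L := by field_simp
        have hμsh : μsharp * (rr ^ 2 / 2) ≤ h := by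
          have h7 : μsharp ≤ h / (rr ^ 2 / 2) := by
            rw [hμsharp]
            apply Real.sSup_le _ (div_nonneg hh0 hRpos.le)
            rintro μ' ⟨hμ'0, hμ'c⟩
            have h6 := hμ'c (x k) hxkX
            rw [hRf] at h6
            exact (le_div_iff₀ hRpos).2 h6
          calc μsharp * (rr ^ 2 / 2) ≤ (h / (rr ^ 2 / 2)) * (rr ^ 2 / 2) :=
                mul_le_mul_of_nonneg_right h7 hRpos.le
            _ = h := by field_simp
        set β := μsharp * rr / (2 * L) with hβdef
        have hβ0 : 0 ≤ β := by rw [hβdef]; positivity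
        have hβ1 : β ≤ 1 := by
          rw [hβdef, div_le_one (by linarith)]
          linarith
        have hq := hquad β ⟨hβ0, hβ1⟩
        have hip2 : β * ⟪f' (x k), u k - x k⟫ ≤ β * (-(h + D) / rr) :=
          mul_le_mul_of_nonneg_left hip hβ0
        have hβr : β * (-(h + D) / rr) = -(μsharp / (2 * L)) * (h + D) := by
          rw [hβdef]
          field_simp
        have hLβ : L * β ^ 2 / 2 = (μsharp / (4 * L)) * (μsharp * (rr ^ 2 / 2)) := by
          rw [hβdef]
          field_simp
          ring
        have h8 : (μsharp / (4 * L)) * (μsharp * (rr ^ 2 / 2)) ≤ (μsharp / (4 * L)) * h :=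
          mul_le_mul_of_nonneg_left hμsh (by positivity)
        have h9 : 0 ≤ (μsharp / (2 * L)) * D :=
          mul_nonneg (by positivity) hD0
        rw [hμeq]
        have hgoal : f (x (k + 1)) ≤ fstar + (1 - μsharp / 4 / L) * h := by
          have hfxk : f (x k) = fstar + h := by rw [hhdef]; ring
          rw [hβr] at hip2
          rw [hLβ] at hq
          have hdiveq : μsharp / 4 / L = μsharp / (4 * L) := by ring
          rw [hdiveq]
          have hstep1 : f (x (k + 1)) ≤ fstar + h + (-(μsharp / (2 * L)) * (h + D))
              + μsharp / (4 * L) * (μsharp * (rr ^ 2 / 2)) := by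
            linarith [hq, hip2]
          have e : -(μsharp / (2 * L)) * (h + D)
              = -(2 * (μsharp / (4 * L) * h)) - (μsharp / (2 * L)) * D := by
            field_simp
            ring
          have e2 : fstar + (1 - μsharp / (4 * L)) * h
              = fstar + h - μsharp / (4 * L) * h := by ring
          rw [e2]
          linarith [hstep1, e, h8, h9]
        linarith
  -- final induction
  have hnn : ∀ k, 0 ≤ f (x k) - fstar := fun k => by linarith [hlb (x k) (hXmem k)]
  rcases le_or_gt μ L with hml | hml
  · have hfac : 0 ≤ 1 - μ / L := by
      rw [sub_nonneg]
      exact (div_le_one hL).2 hml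
    intro k
    induction k with
    | zero => simp
    | succ k ih =>
      calc f (x (k + 1)) - fstar ≤ (1 - μ / L) * (f (x k) - fstar) := hstep k
        _ ≤ (1 - μ / L) * ((1 - μ / L) ^ k * (f (x 0) - fstar)) :=
            mul_le_mul_of_nonneg_left ih hfac
        _ = (1 - μ / L) ^ (k + 1) * (f (x 0) - fstar) := by ring
  · have hneg : 1 - μ / L < 0 := by
      rw [sub_neg]
      exact (one_lt_div hL).2 hml
    have h00 : f (x 0) - fstar = 0 := by
      have h1 := hstep 0
      have h2 := hnn 1
      have h3 := hnn 0
      nlinarith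
    have hz : ∀ k, f (x k) - fstar = 0 := by
      intro k
      induction k with
      | zero => exact h00
      | succ k ih =>
        have h1 := hstep k
        rw [ih] at h1
        have h2 := hnn (k + 1)
        linarith [h1]
    intro k
    rw [hz k, h00, mul_zero]
end
end
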